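/- arXiv:math/0501373 — 6 statements merged into one kernel-verified Lean document; each statement's English description precedes it below -/
import Mathlib

section
/- Let L be a bounded lattice and let a be a central element of L (i.e., a is neutral and complemented). Then the center of the interval [0,a] equals the intersection of the center of L with [0,a]. -/
/-! A central element `a` with complement `b` splits `L` as `[0, a] × [0, b]`: every `z` is
`z ⊓ a ⊔ z ⊓ b`, and both `z ↦ z ⊓ a` and `z ↦ z ⊓ b` preserve `⊔` and `⊓`. An element
`x ≤ a` has components `(x, 0)`, so the neutrality identity for `x` in `L` holds in the first
component because `x` is neutral in `[0, a]`, and trivially in the second. Complements move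
between `L` and `[0, a]` as `y ↦ y ⊓ a` and `y ↦ y ⊔ b`. -/

universe u

/-- An element `a` of a lattice is *neutral* if every triple `{a, x, y}`
generates a distributive sublattice; we use the standard equational
characterization. -/
def IsNeutral {L : Type*} [Lattice L] (a : L) : Prop :=
  ∀ x y : L, (a ⊔ x) ⊓ (a ⊔ y) ⊓ (x ⊔ y) = (a ⊓ x) ⊔ (a ⊓ y) ⊔ (x ⊓ y)

/-- An element of a bounded lattice is *central* if it is neutral and complemented. -/
def IsCentral {L : Type*} [Lattice L] [BoundedOrder L] (a : L) : Prop :=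
  IsNeutral a ∧ ∃ b : L, a ⊓ b = ⊥ ∧ a ⊔ b = ⊤

/-- `a` is an atom of the center `Cen L`. -/
def IsCenterAtom {L : Type*} [Lattice L] [BoundedOrder L] (a : L) : Prop :=
  IsCentral a ∧ a ≠ ⊥ ∧ ∀ b : L, IsCentral b → b < a → b = ⊥

/-- A bounded lattice is *directly indecomposable* if whenever it is isomorphic to a
product of two bounded lattices, one of the factors is trivial. -/
def DirectlyIndecomposable (M : Type u) [Lattice M] [BoundedOrder M] : Prop :=
  ∀ A B : BddLat.{u}, Nonempty (M ≃o ↥A × ↥B) → Subsingleton ↥A ∨ Subsingleton ↥B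

/-- A bounded lattice is *totally decomposable* if it is isomorphic to a direct product
of directly indecomposable lattices. -/
def TotallyDecomposable (M : Type u) [Lattice M] [BoundedOrder M] : Prop :=
  ∃ (ι : Type u) (F : ι → BddLat.{u}),
    (∀ i, DirectlyIndecomposable ↥(F i)) ∧ Nonempty (M ≃o ∀ i, ↥(F i))


section Neutral

variable {L : Type*} [Lattice L] {a : L}

theorem IsNeutral.inf_sup_left (ha : IsNeutral a) (x y : L) :
    a ⊓ (x ⊔ y) = a ⊓ x ⊔ a ⊓ y := by
  have absorb : ∀ x y : L, a ⊓ (a ⊓ x ⊔ y) = a ⊓ x ⊔ a ⊓ y := fun x y => by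
    have h := ha (a ⊓ x) y
    rwa [sup_inf_self, inf_sup_self, inf_left_idem,
      sup_eq_left.mpr (inf_le_left.trans le_sup_left : a ⊓ x ⊓ y ≤ a ⊓ x ⊔ a ⊓ y)] at h
  have hle : a ⊓ (x ⊔ y) ≤ (a ⊔ x) ⊓ (a ⊔ y) ⊓ (x ⊔ y) :=
    le_inf (le_inf (inf_le_left.trans le_sup_left) (inf_le_left.trans le_sup_left)) inf_le_right
  apply le_antisymm _ (sup_le (inf_le_inf_left a le_sup_left) (inf_le_inf_left a le_sup_right))
  calc a ⊓ (x ⊔ y) ≤ a ⊓ (a ⊓ x ⊔ (a ⊓ y ⊔ x ⊓ y)) := by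
        rw [← sup_assoc, ← ha x y]; exact le_inf inf_le_left hle
    _ = a ⊓ x ⊔ (a ⊓ y ⊔ a ⊓ (x ⊓ y)) := by rw [absorb, absorb]
    _ ≤ a ⊓ x ⊔ a ⊓ y := sup_le_sup_left (sup_le le_rfl (inf_le_inf_left a inf_le_right)) _

theorem IsNeutral.inf_sup_right (ha : IsNeutral a) (x y : L) :
    (x ⊔ y) ⊓ a = x ⊓ a ⊔ y ⊓ a := by
  simp only [inf_comm _ a, ha.inf_sup_left]

theorem IsNeutral.Icc {c d : L} {x : Set.Icc c d} (hx : IsNeutral (x : L)) : IsNeutral x :=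
  fun u v => Subtype.ext (hx u v)

end Neutral

section Complemented

variable {L : Type*} [Lattice L] [BoundedOrder L] {a b : L}

theorem IsNeutral.inf_sup_inf_eq_of_isCompl (ha : IsNeutral a) (hab : IsCompl a b) (z : L) :
    z ⊓ a ⊔ z ⊓ b = z := by
  have h := ha z b
  rw [hab.sup_eq_top, inf_top_eq, hab.inf_eq_bot, sup_bot_eq] at h
  refine le_antisymm (sup_le inf_le_left inf_le_left) ?_
  calc z ≤ (a ⊔ z) ⊓ (z ⊔ b) := le_inf le_sup_right le_sup_left
    _ = z ⊓ a ⊔ z ⊓ b := by rw [h, inf_comm a z]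

theorem IsNeutral.sup_inf_eq_of_le_of_le (ha : IsNeutral a) (hab : IsCompl a b) {u v : L}
    (hu : u ≤ a) (hv : v ≤ b) : (u ⊔ v) ⊓ b = v := by
  set t := (u ⊔ v) ⊓ b
  have hat : a ⊓ t = ⊥ := (hab.disjoint.mono_right inf_le_right).eq_bot
  have hav : a ⊓ v = ⊥ := (hab.disjoint.mono_right hv).eq_bot
  have htv : t ⊓ v = v := inf_eq_right.mpr (le_inf le_sup_right hv)
  have hle : t ≤ (a ⊔ t) ⊓ (a ⊔ v) ⊓ (t ⊔ v) :=
    le_inf (le_inf le_sup_right (inf_le_left.trans (sup_le_sup_right hu v))) le_sup_left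
  rw [ha t v, hat, hav, htv, bot_sup_eq, bot_sup_eq] at hle
  exact le_antisymm hle (le_inf le_sup_right hv)

theorem IsNeutral.inf_sup_right_of_isCompl (ha : IsNeutral a) (hab : IsCompl a b) (z w : L) :
    (z ⊔ w) ⊓ b = z ⊓ b ⊔ w ⊓ b := by
  have hzw : z ⊔ w = (z ⊓ a ⊔ w ⊓ a) ⊔ (z ⊓ b ⊔ w ⊓ b) := by
    rw [sup_sup_sup_comm, ha.inf_sup_inf_eq_of_isCompl hab, ha.inf_sup_inf_eq_of_isCompl hab]
  rw [hzw, ha.sup_inf_eq_of_le_of_le hab (sup_le inf_le_right inf_le_right)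
    (sup_le inf_le_right inf_le_right)]

theorem IsNeutral.eq_of_inf_eq_of_inf_eq (ha : IsNeutral a) (hab : IsCompl a b) {s t : L}
    (hsa : s ⊓ a = t ⊓ a) (hsb : s ⊓ b = t ⊓ b) : s = t := by
  rw [← ha.inf_sup_inf_eq_of_isCompl hab s, hsa, hsb, ha.inf_sup_inf_eq_of_isCompl hab]

end Complemented

section Center

variable {L : Type*} [Lattice L] [BoundedOrder L] {a b : L}

theorem IsNeutral.of_Icc (ha : IsNeutral a) (hab : IsCompl a b) {x : Set.Icc (⊥ : L) a}
    (hx : IsNeutral x) : IsNeutral (x : L) := by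
  have hxa : (x : L) ⊓ a = x := inf_eq_left.mpr x.2.2
  have hxb : (x : L) ⊓ b = ⊥ := (hab.disjoint.mono_left x.2.2).eq_bot
  have inf_inf_a (s t : L) : s ⊓ t ⊓ a = s ⊓ a ⊓ (t ⊓ a) := inf_inf_distrib_right s t a
  have inf_inf_b (s t : L) : s ⊓ t ⊓ b = s ⊓ b ⊓ (t ⊓ b) := inf_inf_distrib_right s t b
  intro u v
  apply ha.eq_of_inf_eq_of_inf_eq hab
  · simp only [inf_inf_a, ha.inf_sup_right, hxa]
    exact congrArg Subtype.val (hx ⟨u ⊓ a, bot_le, inf_le_right⟩ ⟨v ⊓ a, bot_le, inf_le_right⟩)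
  · simp only [inf_inf_b, ha.inf_sup_right_of_isCompl hab, hxb, bot_sup_eq, bot_inf_eq]
    exact inf_eq_left.mpr (inf_le_left.trans le_sup_left)

theorem IsCentral.of_Icc (ha : IsCentral a) [Fact (⊥ ≤ a)] {x : Set.Icc (⊥ : L) a}
    (hx : IsCentral x) : IsCentral (x : L) := by
  obtain ⟨hna, b, hab_inf, hab_sup⟩ := ha
  have hab : IsCompl a b := .of_eq hab_inf hab_sup
  obtain ⟨hnx, y, hxy_inf, hxy_sup⟩ := hx
  have hxy_inf : (x : L) ⊓ y = ⊥ := congrArg Subtype.val hxy_inf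
  have hxy_sup : (x : L) ⊔ y = a := congrArg Subtype.val hxy_sup
  refine ⟨hna.of_Icc hab hnx, (y : L) ⊔ b, ?_, by rw [← sup_assoc, hxy_sup, hab_sup]⟩
  calc (x : L) ⊓ ((y : L) ⊔ b) = (x : L) ⊓ (a ⊓ ((y : L) ⊔ b)) := by
        rw [← inf_assoc, inf_eq_left.mpr x.2.2]
    _ = (x : L) ⊓ y := by rw [hna.inf_sup_left, hab_inf, sup_bot_eq, inf_eq_right.mpr y.2.2]
    _ = ⊥ := hxy_inf

theorem IsCentral.Icc [Fact (⊥ ≤ a)] {x : Set.Icc (⊥ : L) a} (hx : IsCentral (x : L)) :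
    IsCentral x := by
  obtain ⟨hnx, y, hxy_inf, hxy_sup⟩ := hx
  have hsup : (x : L) ⊔ y ⊓ a = a := by
    have h := hnx y a
    rw [hxy_sup, sup_eq_right.mpr x.2.2, top_inf_eq, sup_comm y a, inf_sup_self,
      hxy_inf, inf_eq_left.mpr x.2.2, bot_sup_eq] at h
    exact h.symm
  refine ⟨hnx.Icc, ⟨y ⊓ a, bot_le, inf_le_right⟩, ?_, Subtype.ext hsup⟩
  exact Subtype.ext (le_bot_iff.mp ((inf_le_inf_left _ inf_le_left).trans hxy_inf.le))

end Center

/-- For a central element `a` of a bounded lattice `L`, the center of the interval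
`[0, a]` equals `Cen L ∩ [0, a]`. -/
theorem center_Icc_eq {L : Type*} [Lattice L] [BoundedOrder L] (a : L)
    (ha : IsCentral a) :
    haveI : Fact ((⊥ : L) ≤ a) := ⟨bot_le⟩
    ∀ x : Set.Icc (⊥ : L) a, IsCentral x ↔ IsCentral (x : L) := by
  have : Fact ((⊥ : L) ≤ a) := ⟨bot_le⟩
  exact fun x => ⟨ha.of_Icc, IsCentral.Icc⟩
end

section
/- Let L be a complete lattice. Then L is totally decomposable (isomorphic to a direct product of directly indecomposable lattices) if and only if: Cen(L) is a complete sublattice of L, Cen(L) is atomistic, and for every x in L, x equals the join over all atoms u of Cen(L) of x ∧ u. -/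
/-!
A central element `u` with complement `w` splits a bounded lattice as `Iic u × Iic w`, so a
bounded lattice is directly indecomposable iff its center is `{⊥, ⊤}`. In a product of such
lattices the central elements are therefore the `{⊥, ⊤}`-valued families: they are closed under
all joins and meets, and the families supported at one nontrivial coordinate are center atoms.
Conversely, distinct center atoms are disjoint because meets of central elements are central,
and central elements distribute over arbitrary joins, so `x ↦ (x ⊓ u)_u` is an isomorphism onto
`∏ Iic u`; each factor has trivial center since `u` is an atom of the center of `L`.
Atomisticity of the center follows from the other two conditions.
-/

universe u

section Neutral

variable {M : Type*} [Lattice M] {u : M}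

lemma IsNeutral.dual (h : IsNeutral u) : IsNeutral (OrderDual.toDual u) :=
  fun x y => (h (OrderDual.ofDual x) (OrderDual.ofDual y)).symm

lemma IsNeutral.inf_sup (h : IsNeutral u) (a b : M) :
    u ⊓ (a ⊔ b) = u ⊓ a ⊔ u ⊓ b := by
  refine le_antisymm ?_ (sup_le (inf_le_inf_left _ le_sup_left) (inf_le_inf_left _ le_sup_right))
  set c := u ⊓ a ⊔ u ⊓ b
  have below_median : ∀ p q : M, u ⊓ (p ⊔ q) ≤ (u ⊔ p) ⊓ (u ⊔ q) ⊓ (p ⊔ q) := fun p q =>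
    le_inf (le_inf (inf_le_left.trans le_sup_left) (inf_le_left.trans le_sup_left)) inf_le_right
  have h1 : u ⊓ (a ⊔ b) ≤ c ⊔ a ⊓ b := (below_median a b).trans (h a b).le
  calc u ⊓ (a ⊔ b) ≤ u ⊓ (c ⊔ a ⊓ b) := le_inf inf_le_left h1
    _ ≤ u ⊓ c ⊔ u ⊓ (a ⊓ b) ⊔ c ⊓ (a ⊓ b) := (below_median c (a ⊓ b)).trans (h c (a ⊓ b)).le
    _ ≤ c := sup_le (sup_le inf_le_right (inf_le_inf_left u inf_le_left |>.trans le_sup_left))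
        inf_le_left

lemma IsNeutral.sup_inf (h : IsNeutral u) (a b : M) :
    u ⊔ a ⊓ b = (u ⊔ a) ⊓ (u ⊔ b) :=
  h.dual.inf_sup (OrderDual.toDual a) (OrderDual.toDual b)

lemma IsNeutral.eq_of_inf_eq_of_sup_eq {x y : M} (h : IsNeutral u) (hinf : x ⊓ u = y ⊓ u)
    (hsup : x ⊔ u = y ⊔ u) : x = y := by
  have hsup' : u ⊔ y = u ⊔ x := by rw [sup_comm u y, ← hsup, sup_comm]
  have hinf' : u ⊓ y = u ⊓ x := by rw [inf_comm u y, ← hinf, inf_comm]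
  have key := h x y
  rw [hsup', hinf', inf_idem, sup_idem] at key
  have hx : x = u ⊓ x ⊔ x ⊓ y :=
    le_antisymm ((le_inf le_sup_right le_sup_left).trans key.le) (sup_le inf_le_right inf_le_left)
  have hy : y = u ⊓ x ⊔ x ⊓ y := by
    refine le_antisymm ((le_inf ?_ le_sup_right).trans key.le) (sup_le ?_ inf_le_right)
    · rw [← hsup']; exact le_sup_right
    · rw [← hinf']; exact inf_le_right
  rw [hx, ← hy]

lemma IsNeutral.eq_inf_sup_inf [BoundedOrder M] {w : M} (h : IsNeutral u) (h1 : u ⊓ w = ⊥)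
    (h2 : u ⊔ w = ⊤) (x : M) : x = x ⊓ u ⊔ x ⊓ w := by
  have key := h x w
  rw [h1, h2, inf_top_eq, sup_bot_eq, inf_comm u x] at key
  exact le_antisymm ((le_inf le_sup_right le_sup_left).trans key.le)
    (sup_le inf_le_left inf_le_left)

lemma isNeutral_bot [OrderBot M] : IsNeutral (⊥ : M) := fun x y => by
  simpa only [bot_sup_eq, bot_inf_eq] using inf_eq_left.2 inf_le_sup

lemma isNeutral_top [OrderTop M] : IsNeutral (⊤ : M) := fun x y => by
  simpa only [top_sup_eq, top_inf_eq, inf_top_eq] using (sup_eq_left.2 inf_le_sup).symm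

end Neutral

section Central

variable {M N : Type*} [Lattice M] [BoundedOrder M] [Lattice N] [BoundedOrder N]

lemma isCentral_bot : IsCentral (⊥ : M) :=
  ⟨isNeutral_bot, ⊤, bot_inf_eq ⊤, bot_sup_eq ⊤⟩

lemma isCentral_top : IsCentral (⊤ : M) :=
  ⟨isNeutral_top, ⊥, inf_bot_eq ⊤, sup_bot_eq ⊤⟩

lemma OrderIso.isCentral (f : M ≃o N) {a : M} (h : IsCentral a) : IsCentral (f a) := by
  obtain ⟨hn, b, hb1, hb2⟩ := h
  refine ⟨fun x y => ?_, f b, by rw [← map_inf, hb1, f.map_bot], by rw [← map_sup, hb2, f.map_top]⟩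
  simpa only [map_inf, map_sup, f.apply_symm_apply] using congrArg f (hn (f.symm x) (f.symm y))

lemma OrderIso.isCentral_iff (f : M ≃o N) {a : M} : IsCentral (f a) ↔ IsCentral a :=
  ⟨fun h => by simpa using f.symm.isCentral h, f.isCentral⟩

lemma OrderIso.isCenterAtom (f : M ≃o N) {a : M} (h : IsCenterAtom a) : IsCenterAtom (f a) := by
  obtain ⟨hc, hne, hmin⟩ := h
  refine ⟨f.isCentral hc, fun hb => hne (f.injective (hb.trans f.map_bot.symm)),
    fun b hb hlt => ?_⟩
  have := hmin _ (f.symm.isCentral hb) (by simpa using f.symm.strictMono hlt)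
  rw [← f.apply_symm_apply b, this, f.map_bot]

lemma IsCentral.prod {a : M} {b : N} (ha : IsCentral a) (hb : IsCentral b) :
    IsCentral (a, b) := by
  obtain ⟨hna, a', ha1, ha2⟩ := ha
  obtain ⟨hnb, b', hb1, hb2⟩ := hb
  exact ⟨fun x y => Prod.ext (hna x.1 y.1) (hnb x.2 y.2), (a', b'), Prod.ext ha1 hb1,
    Prod.ext ha2 hb2⟩

lemma isCentral_pi_iff {ι : Type*} {G : ι → Type*} [∀ i, Lattice (G i)] [∀ i, BoundedOrder (G i)]
    {c : ∀ i, G i} : IsCentral c ↔ ∀ i, IsCentral (c i) := by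
  classical
  constructor
  · rintro ⟨hn, b, hb1, hb2⟩ i
    refine ⟨fun x y => ?_, b i, congrFun hb1 i, congrFun hb2 i⟩
    simpa using congrFun (hn (Function.update ⊥ i x) (Function.update ⊥ i y)) i
  · intro h
    choose hn b hb1 hb2 using h
    exact ⟨fun x y => funext fun i => hn i (x i) (y i), b, funext hb1, funext hb2⟩

noncomputable def IsNeutral.orderIsoIicProd {u w : M} (hu : IsNeutral u) (h1 : u ⊓ w = ⊥)
    (h2 : u ⊔ w = ⊤) : M ≃o Set.Iic u × Set.Iic w := by
  refine Equiv.toOrderIso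
    ⟨fun x => (⟨x ⊓ u, inf_le_right⟩, ⟨x ⊓ w, inf_le_right⟩), fun p => (p.1 : M) ⊔ p.2,
      fun x => (hu.eq_inf_sup_inf h1 h2 x).symm, ?_⟩
    (fun x y hxy => ⟨inf_le_inf_right u hxy, inf_le_inf_right w hxy⟩)
    (fun p q hpq => sup_le_sup hpq.1 hpq.2)
  rintro ⟨⟨a, ha⟩, ⟨b, hb⟩⟩
  have hbu : b ⊓ u = ⊥ := le_bot_iff.1 ((inf_le_inf_right u hb).trans (by rw [inf_comm, h1]))
  have ha_inf : (a ⊔ b) ⊓ u = a := by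
    rw [inf_comm, hu.inf_sup, inf_comm u a, inf_comm u b, inf_eq_left.2 ha, hbu, sup_bot_eq]
  have hb_inf : (a ⊔ b) ⊓ w = b := by
    refine hu.eq_of_inf_eq_of_sup_eq ?_ ?_
    · rw [hbu, inf_assoc, inf_comm w u, h1, inf_bot_eq]
    · rw [sup_comm, hu.sup_inf, h2, inf_top_eq, ← sup_assoc, sup_eq_left.2 ha, sup_comm]
  exact Prod.ext (Subtype.ext ha_inf) (Subtype.ext hb_inf)

lemma IsCentral.isCentral_coe {u : M} (hu : IsCentral u) {c : Set.Iic u} (hc : IsCentral c) :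
    IsCentral (c : M) := by
  obtain ⟨hn, w, h1, h2⟩ := hu
  convert (hn.orderIsoIicProd h1 h2).symm.isCentral (hc.prod (isCentral_bot (M := Set.Iic w)))
  exact (sup_bot_eq _).symm

lemma IsCenterAtom.eq_bot_or_eq_of_le {u b : M} (hu : IsCenterAtom u) (hb : IsCentral b)
    (hle : b ≤ u) : b = ⊥ ∨ b = u :=
  hle.lt_or_eq.imp (hu.2.2 b hb) id

end Central

section TrivialCenter

def HasTrivialCenter (M : Type*) [Lattice M] [BoundedOrder M] : Prop :=
  ∀ a : M, IsCentral a → a = ⊥ ∨ a = ⊤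

variable {M : Type u} [Lattice M] [BoundedOrder M]

lemma HasTrivialCenter.isCentral_iff (h : HasTrivialCenter M) {a : M} :
    IsCentral a ↔ a = ⊥ ∨ a = ⊤ :=
  ⟨h a, by rintro (rfl | rfl); exacts [isCentral_bot, isCentral_top]⟩

lemma DirectlyIndecomposable.hasTrivialCenter (h : DirectlyIndecomposable M) :
    HasTrivialCenter M := by
  rintro a ⟨hn, w, h1, h2⟩
  rcases h (BddLat.of (Set.Iic a)) (BddLat.of (Set.Iic w)) ⟨hn.orderIsoIicProd h1 h2⟩ with hA | hB
  · exact .inl (congrArg Subtype.val (@Subsingleton.elim _ hA ⊤ ⊥))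
  · have hw : w = ⊥ := congrArg Subtype.val (@Subsingleton.elim _ hB ⊤ ⊥)
    exact .inr (by rw [← h2, hw, sup_bot_eq])

lemma HasTrivialCenter.directlyIndecomposable (h : HasTrivialCenter M) :
    DirectlyIndecomposable M := by
  rintro A B ⟨e⟩
  rcases h _ (e.symm.isCentral (isCentral_top.prod isCentral_bot)) with h' | h'
  · have : ((⊤, ⊥) : A × B) = ⊥ := by rw [← e.apply_symm_apply (⊤, ⊥), h', e.map_bot]
    exact .inl (subsingleton_of_bot_eq_top (congrArg Prod.fst this).symm)
  · have : ((⊤, ⊥) : A × B) = ⊤ := by rw [← e.apply_symm_apply (⊤, ⊥), h', e.map_top]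
    exact .inr (subsingleton_of_bot_eq_top (congrArg Prod.snd this))

lemma IsCenterAtom.hasTrivialCenter_Iic {u : M} (hu : IsCenterAtom u) :
    HasTrivialCenter (Set.Iic u) := fun c hc =>
  (hu.eq_bot_or_eq_of_le (hu.1.isCentral_coe hc) c.2).imp Subtype.ext Subtype.ext

end TrivialCenter

section Pi

variable {ι : Type*} {G : ι → Type*} [∀ i, Lattice (G i)] [∀ i, BoundedOrder (G i)]

lemma IsLUB.isCentral_pi (htriv : ∀ i, HasTrivialCenter (G i)) {s : Set (∀ i, G i)}
    {x : ∀ i, G i} (hx : IsLUB s x) (hs : ∀ a ∈ s, IsCentral a) : IsCentral x := by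
  refine isCentral_pi_iff.2 fun i => (htriv i).isCentral_iff.2 ?_
  have hxi := isLUB_pi.1 hx i
  by_cases htop : ∃ a ∈ s, a i = ⊤
  · obtain ⟨a, ha, hai⟩ := htop
    exact .inr (top_le_iff.1 (hai ▸ hxi.1 ⟨a, ha, rfl⟩))
  · refine .inl (le_bot_iff.1 (hxi.2 ?_))
    rintro _ ⟨a, ha, rfl⟩
    simp only [not_exists, not_and] at htop
    exact ((htriv i _ (isCentral_pi_iff.1 (hs a ha) i)).resolve_right (htop a ha)).le

lemma IsGLB.isCentral_pi (htriv : ∀ i, HasTrivialCenter (G i)) {s : Set (∀ i, G i)}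
    {x : ∀ i, G i} (hx : IsGLB s x) (hs : ∀ a ∈ s, IsCentral a) : IsCentral x := by
  refine isCentral_pi_iff.2 fun i => (htriv i).isCentral_iff.2 ?_
  have hxi := isGLB_pi.1 hx i
  by_cases hbot : ∃ a ∈ s, a i = ⊥
  · obtain ⟨a, ha, hai⟩ := hbot
    exact .inl (le_bot_iff.1 (hai ▸ hxi.1 ⟨a, ha, rfl⟩))
  · refine .inr (top_le_iff.1 (hxi.2 ?_))
    rintro _ ⟨a, ha, rfl⟩
    simp only [not_exists, not_and] at hbot
    exact ((htriv i _ (isCentral_pi_iff.1 (hs a ha) i)).resolve_left (hbot a ha)).ge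

lemma isCenterAtom_update_bot_top [DecidableEq ι] (i : ι) [Nontrivial (G i)]
    (htriv : HasTrivialCenter (G i)) : IsCenterAtom (Function.update (⊥ : ∀ i, G i) i ⊤) := by
  have hcentral : ∀ j, IsCentral (Function.update (⊥ : ∀ i, G i) i ⊤ j) := fun j => by
    rcases eq_or_ne j i with rfl | hj
    · simpa using isCentral_top
    · simpa [hj] using isCentral_bot
  refine ⟨isCentral_pi_iff.2 hcentral, fun h => ?_, fun b hb hlt => ?_⟩
  · simpa using congrFun h i
  · have hb_ne : ∀ j, j ≠ i → b j = ⊥ := fun j hj => by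
      simpa [hj] using hlt.le j
    rcases htriv _ (isCentral_pi_iff.1 hb i) with hbi | hbi
    · exact funext fun j => (eq_or_ne j i).elim (· ▸ hbi) (hb_ne j)
    · refine absurd (funext fun j => ?_) hlt.ne
      rcases eq_or_ne j i with rfl | hj
      · simpa using hbi
      · simpa [hj] using hb_ne j hj

end Pi

section Complete

variable {L : Type*} [CompleteLattice L]

lemma IsCentral.inf_iSup {u : L} (hu : IsCentral u) {ι : Sort*} (g : ι → L) :
    u ⊓ ⨆ i, g i = ⨆ i, u ⊓ g i := by
  obtain ⟨hn, w, hw1, hw2⟩ := hu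
  refine le_antisymm ?_ (le_inf (iSup_le fun i => inf_le_left) (iSup_mono fun i => inf_le_right))
  set t := ⨆ i, u ⊓ g i
  have hsplit : ⨆ i, g i ≤ t ⊔ w ⊓ ⨆ i, g i := iSup_le fun i =>
    calc g i = g i ⊓ u ⊔ g i ⊓ w := hn.eq_inf_sup_inf hw1 hw2 (g i)
      _ ≤ t ⊔ w ⊓ ⨆ i, g i := sup_le_sup (inf_comm (g i) u ▸ le_iSup (fun i => u ⊓ g i) i)
          (inf_comm (g i) w ▸ inf_le_inf_left w (le_iSup g i))
  calc u ⊓ ⨆ i, g i ≤ u ⊓ (t ⊔ w ⊓ ⨆ i, g i) := inf_le_inf_left u hsplit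
    _ = u ⊓ t ⊔ u ⊓ (w ⊓ ⨆ i, g i) := hn.inf_sup _ _
    _ = u ⊓ t := by rw [← inf_assoc, hw1, bot_inf_eq, sup_bot_eq]
    _ ≤ t := inf_le_right

lemma OrderIso.le_iSup_inf_isCenterAtom {ι : Type*} {G : ι → Type*} [∀ i, Lattice (G i)]
    [∀ i, BoundedOrder (G i)] (f : L ≃o ∀ i, G i) (htriv : ∀ i, HasTrivialCenter (G i)) (x : L) :
    x ≤ ⨆ u : {u : L // IsCenterAtom u}, x ⊓ u := by
  classical
  rw [← f.le_iff_le]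
  intro i
  rcases subsingleton_or_nontrivial (G i) with hsub | hnontriv
  · exact (Subsingleton.elim _ _).le
  set e := f.symm (Function.update ⊥ i ⊤)
  have he : IsCenterAtom e := f.symm.isCenterAtom (isCenterAtom_update_bot_top i (htriv i))
  calc f x i = f (x ⊓ e) i := by simp [e]
    _ ≤ _ := f.monotone (le_iSup (fun u : {u : L // IsCenterAtom u} => x ⊓ u) ⟨e, he⟩) i

lemma IsCenterAtom.inf_eq_bot (hinf : ∀ a b : L, IsCentral a → IsCentral b → IsCentral (a ⊓ b))
    {u v : L} (hu : IsCenterAtom u) (hv : IsCenterAtom v) (hne : u ≠ v) : u ⊓ v = ⊥ := by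
  refine (hu.eq_bot_or_eq_of_le (hinf u v hu.1 hv.1) inf_le_left).resolve_right fun h => hne ?_
  have huv : u ≤ v := inf_eq_left.1 h
  exact (hv.eq_bot_or_eq_of_le hu.1 huv).resolve_left hu.2.1

lemma eq_sSup_isCenterAtom_le (hinf : ∀ a b : L, IsCentral a → IsCentral b → IsCentral (a ⊓ b))
    (hjoin : ∀ x : L, x = ⨆ u : {u : L // IsCenterAtom u}, x ⊓ (u : L)) {a : L}
    (ha : IsCentral a) : a = sSup {u : L | IsCenterAtom u ∧ u ≤ a} := by
  refine le_antisymm ((hjoin a).le.trans (iSup_le fun u => ?_)) (sSup_le fun u hu => hu.2)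
  rcases u.2.eq_bot_or_eq_of_le (hinf a u ha u.2.1) inf_le_right with h | h
  · exact h.le.trans bot_le
  · exact h.le.trans (le_sSup ⟨u.2, h.symm.trans_le inf_le_left⟩)

noncomputable def orderIsoPiIic {ι : Type*} (e : ι → L) (hc : ∀ i, IsCentral (e i))
    (hdisj : ∀ i j, i ≠ j → e i ⊓ e j = ⊥) (hjoin : ∀ x : L, x = ⨆ i, x ⊓ e i) :
    L ≃o ∀ i, Set.Iic (e i) := by
  refine Equiv.toOrderIso
    ⟨fun x i => ⟨x ⊓ e i, inf_le_right⟩, fun y => ⨆ i, (y i : L), fun x => (hjoin x).symm, ?_⟩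
    (fun x x' h i => inf_le_inf_right _ h) (fun y y' h => iSup_mono fun i => h i)
  intro y
  funext i
  refine Subtype.ext ?_
  change (⨆ j, (y j : L)) ⊓ e i = y i
  have hoff : ∀ j, j ≠ i → e i ⊓ (y j : L) = ⊥ := fun j hj =>
    le_bot_iff.1 ((inf_le_inf_left _ (y j).2).trans (hdisj i j hj.symm).le)
  rw [inf_comm, (hc i).inf_iSup, iSup_split_single _ i, iSup₂_eq_bot.2 hoff, sup_bot_eq,
    inf_eq_right.2 (y i).2]

end Complete

/-- A complete lattice is totally decomposable iff its center is a complete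
atomistic sublattice and every element is the join of its meets with the
atoms of the center. -/
theorem totallyDecomposable_iff {L : Type u} [CompleteLattice L] :
    TotallyDecomposable L ↔
      ((∀ S : Set L, (∀ a ∈ S, IsCentral a) → IsCentral (sSup S) ∧ IsCentral (sInf S)) ∧
        (∀ a : L, IsCentral a → a = sSup {u : L | IsCenterAtom u ∧ u ≤ a}) ∧
        (∀ x : L, x = ⨆ u : {u : L // IsCenterAtom u}, x ⊓ (u : L))) := by
  have inf_of_closed : (∀ S : Set L, (∀ a ∈ S, IsCentral a) → IsCentral (sSup S) ∧
      IsCentral (sInf S)) → ∀ a b : L, IsCentral a → IsCentral b → IsCentral (a ⊓ b) :=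
    fun hclosed a b ha hb => sInf_pair (a := a) (b := b) ▸
      (hclosed {a, b} (by rintro c (rfl | rfl) <;> assumption)).2
  constructor
  · rintro ⟨ι, F, hF, ⟨f⟩⟩
    have htriv : ∀ i, HasTrivialCenter (F i) := fun i => (hF i).hasTrivialCenter
    have hcentral_image : ∀ S : Set L, (∀ a ∈ S, IsCentral a) → ∀ b ∈ f '' S, IsCentral b := by
      rintro S hS _ ⟨a, ha, rfl⟩
      exact f.isCentral (hS a ha)
    have hclosed : ∀ S : Set L, (∀ a ∈ S, IsCentral a) → IsCentral (sSup S) ∧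
        IsCentral (sInf S) := fun S hS =>
      ⟨f.isCentral_iff.1 ((f.isLUB_image'.2 (isLUB_sSup S)).isCentral_pi htriv
          (hcentral_image S hS)),
        f.isCentral_iff.1 ((f.isGLB_image'.2 (isGLB_sInf S)).isCentral_pi htriv
          (hcentral_image S hS))⟩
    have hjoin : ∀ x : L, x = ⨆ u : {u : L // IsCenterAtom u}, x ⊓ (u : L) := fun x =>
      (f.le_iSup_inf_isCenterAtom htriv x).antisymm (iSup_le fun _ => inf_le_left)
    exact ⟨hclosed, fun a => eq_sSup_isCenterAtom_le (inf_of_closed hclosed) hjoin, hjoin⟩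
  · rintro ⟨hclosed, -, hjoin⟩
    refine ⟨{u : L // IsCenterAtom u}, fun u => BddLat.of (Set.Iic (u : L)),
      fun u => u.2.hasTrivialCenter_Iic.directlyIndecomposable, ⟨?_⟩⟩
    exact orderIsoPiIic Subtype.val (fun u => u.2.1)
      (fun u v hne => u.2.inf_eq_bot (inf_of_closed hclosed) v.2 (Subtype.coe_ne_coe.2 hne)) hjoin
end

section
/- Let L be a finitely bi-spatial complete lattice. Then the center Cen(L) is a complete sublattice of L: arbitrary joins and meets (computed in L) of families of central elements are central, and the join of a family of central elements a_i has complement the meet of the complements ¬a_i. -/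
universe u

/-- A lattice is *finitely spatial* if every element is the join of the
join-irreducible elements below it. -/
def FinitelySpatial (L : Type*) [Lattice L] : Prop :=
  ∀ x : L, IsLUB {p : L | SupIrred p ∧ p ≤ x} x

/-- A lattice is *dually finitely spatial* if every element is the meet of the
meet-irreducible elements above it. -/
def DuallyFinitelySpatial (L : Type*) [Lattice L] : Prop :=
  ∀ x : L, IsGLB {u : L | InfIrred u ∧ x ≤ u} x

/-!
A central element `a` with complement `c` splits every join-irreducible `p` as
`p = (a ⊓ p) ⊔ (c ⊓ p)`, hence `p ≤ a` or `p ≤ c`; dually every meet-irreducible lies above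
`a` or `c`. This splitting property passes from a family of pairs `(aᵢ, cᵢ)` to
`(⨆ aᵢ, ⨅ cᵢ)`: a join-irreducible below no `aᵢ` lies below every `cᵢ`. In a finitely
bi-spatial lattice, comparisons can be tested on irreducibles, and a splitting pair `(s, t)`
is then complementary with `s` neutral.
-/

section Lattice

variable {L : Type*} [Lattice L]

theorem inf_sup_inf_sup_inf_le_sup_inf_sup_inf_sup (a x y : L) :
    (a ⊓ x) ⊔ (a ⊓ y) ⊔ (x ⊓ y) ≤ (a ⊔ x) ⊓ (a ⊔ y) ⊓ (x ⊔ y) :=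
  sup_le (sup_le
    (le_inf (le_inf (inf_le_left.trans le_sup_left) (inf_le_left.trans le_sup_left))
      (inf_le_right.trans le_sup_left))
    (le_inf (le_inf (inf_le_left.trans le_sup_left) (inf_le_right.trans le_sup_right))
      (inf_le_right.trans le_sup_right)))
    (le_inf (le_inf (inf_le_left.trans le_sup_right) (inf_le_right.trans le_sup_right))
      (inf_le_left.trans le_sup_left))

def SplitsIrreducibles (s t : L) : Prop :=
  (∀ p : L, SupIrred p → p ≤ s ∨ p ≤ t) ∧ ∀ u : L, InfIrred u → s ≤ u ∨ t ≤ u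

theorem SplitsIrreducibles.symm {s t : L} (h : SplitsIrreducibles s t) :
    SplitsIrreducibles t s :=
  ⟨fun p hp => (h.1 p hp).symm, fun u hu => (h.2 u hu).symm⟩

theorem le_inf_sup_inf_of_splits (hFS : FinitelySpatial L) {s t : L}
    (h : SplitsIrreducibles s t) (x : L) : x ≤ (x ⊓ s) ⊔ (x ⊓ t) := by
  refine (hFS x).2 fun p ⟨hp, hpx⟩ => ?_
  rcases h.1 p hp with hps | hpt
  · exact le_sup_of_le_left (le_inf hpx hps)
  · exact le_sup_of_le_right (le_inf hpx hpt)

theorem sup_inf_sup_le_of_splits (hDFS : DuallyFinitelySpatial L) {s t : L}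
    (h : SplitsIrreducibles s t) (x : L) : (x ⊔ s) ⊓ (x ⊔ t) ≤ x := by
  refine (hDFS x).2 fun u ⟨hu, hxu⟩ => ?_
  rcases h.2 u hu with hsu | htu
  · exact inf_le_of_left_le (sup_le hxu hsu)
  · exact inf_le_of_right_le (sup_le hxu htu)

theorem inf_sup_le_of_splits (hFS : FinitelySpatial L) (hDFS : DuallyFinitelySpatial L)
    {s t : L} (h : SplitsIrreducibles s t) (x y : L) :
    s ⊓ (x ⊔ y) ≤ (s ⊓ x) ⊔ (s ⊓ y) := by
  refine (hDFS _).2 fun u ⟨hu, hle⟩ => ?_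
  rcases h.2 u hu with hsu | htu
  · exact inf_le_of_left_le hsu
  · have below : ∀ z : L, s ⊓ z ≤ u → z ≤ u := fun z hz =>
      (le_inf_sup_inf_of_splits hFS h z).trans
        (sup_le (inf_comm z s ▸ hz) (inf_le_right.trans htu))
    exact inf_le_of_right_le
      (sup_le (below x (le_sup_left.trans hle)) (below y (le_sup_right.trans hle)))

theorem SplitsIrreducibles.isNeutral (hFS : FinitelySpatial L)
    (hDFS : DuallyFinitelySpatial L) {s t : L} (h : SplitsIrreducibles s t) :
    IsNeutral s := by
  intro x y
  refine le_antisymm ?_ (inf_sup_inf_sup_inf_le_sup_inf_sup_inf_sup s x y)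
  set m := (s ⊔ x) ⊓ (s ⊔ y) ⊓ (x ⊔ y)
  have part_s : m ⊓ s ≤ (s ⊓ x) ⊔ (s ⊓ y) :=
    (le_inf inf_le_right (inf_le_left.trans inf_le_right)).trans
      (inf_sup_le_of_splits hFS hDFS h x y)
  have below_t : ∀ z : L, (s ⊔ z) ⊓ t ≤ z := fun z =>
    (inf_le_inf_right t (sup_comm s z).le |>.trans
      (inf_le_inf_left _ le_sup_right)).trans (sup_inf_sup_le_of_splits hDFS h z)
  have part_t : m ⊓ t ≤ x ⊓ y :=
    le_inf ((inf_le_inf_right t (inf_le_left.trans inf_le_left)).trans (below_t x))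
      ((inf_le_inf_right t (inf_le_left.trans inf_le_right)).trans (below_t y))
  calc m ≤ (m ⊓ s) ⊔ (m ⊓ t) := le_inf_sup_inf_of_splits hFS h m
    _ ≤ (s ⊓ x) ⊔ (s ⊓ y) ⊔ (x ⊓ y) := sup_le_sup part_s part_t

end Lattice

section BoundedLattice

variable {L : Type*} [Lattice L] [BoundedOrder L]

theorem IsNeutral.inf_sup_inf_eq_and_sup_inf_sup_eq {a c : L} (ha : IsNeutral a)
    (hac : IsCompl a c) (x : L) :
    (a ⊓ x) ⊔ (c ⊓ x) = x ∧ (a ⊔ x) ⊓ (c ⊔ x) = x := by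
  have hn := ha x c
  rw [hac.inf_eq_bot, hac.sup_eq_top, inf_top_eq, sup_bot_eq, sup_comm x c,
    inf_comm x c] at hn
  have lower : (a ⊓ x) ⊔ (c ⊓ x) ≤ x := sup_le inf_le_right inf_le_right
  have upper : x ≤ (a ⊔ x) ⊓ (c ⊔ x) := le_inf le_sup_right le_sup_right
  exact ⟨le_antisymm lower (hn ▸ upper), le_antisymm (hn ▸ lower) upper⟩

theorem IsNeutral.splitsIrreducibles {a c : L} (ha : IsNeutral a) (hac : IsCompl a c) :
    SplitsIrreducibles a c := by
  refine ⟨fun p hp => ?_, fun u hu => ?_⟩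
  · rcases hp.2 (ha.inf_sup_inf_eq_and_sup_inf_sup_eq hac p).1 with hap | hcp
    · exact Or.inl (inf_eq_right.mp hap)
    · exact Or.inr (inf_eq_right.mp hcp)
  · rcases hu.2 (ha.inf_sup_inf_eq_and_sup_inf_sup_eq hac u).2 with hau | hcu
    · exact Or.inl (sup_eq_right.mp hau)
    · exact Or.inr (sup_eq_right.mp hcu)

theorem SplitsIrreducibles.isCompl (hFS : FinitelySpatial L)
    (hDFS : DuallyFinitelySpatial L) {s t : L} (h : SplitsIrreducibles s t) :
    IsCompl s t := by
  refine IsCompl.of_eq (le_antisymm ((hDFS ⊥).2 fun u ⟨hu, _⟩ => ?_) bot_le)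
    (le_antisymm le_top ((hFS ⊤).2 fun p ⟨hp, _⟩ => ?_))
  · rcases h.2 u hu with hsu | htu
    · exact inf_le_of_left_le hsu
    · exact inf_le_of_right_le htu
  · rcases h.1 p hp with hps | hpt
    · exact le_sup_of_le_left hps
    · exact le_sup_of_le_right hpt

theorem SplitsIrreducibles.isCentral (hFS : FinitelySpatial L)
    (hDFS : DuallyFinitelySpatial L) {s t : L} (h : SplitsIrreducibles s t) :
    IsCentral s :=
  ⟨h.isNeutral hFS hDFS, t, (h.isCompl hFS hDFS).inf_eq_bot, (h.isCompl hFS hDFS).sup_eq_top⟩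

end BoundedLattice

theorem SplitsIrreducibles.iSup_iInf {L ι : Type*} [CompleteLattice L] {a c : ι → L}
    (h : ∀ i, SplitsIrreducibles (a i) (c i)) :
    SplitsIrreducibles (⨆ i, a i) (⨅ i, c i) := by
  refine ⟨fun p hp => ?_, fun u hu => ?_⟩
  · by_cases hpa : ∃ i, p ≤ a i
    · obtain ⟨i, hpi⟩ := hpa
      exact Or.inl (le_iSup_of_le i hpi)
    · exact Or.inr (le_iInf fun i => ((h i).1 p hp).resolve_left fun hpi => hpa ⟨i, hpi⟩)
  · by_cases hcu : ∃ i, c i ≤ u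
    · obtain ⟨i, hiu⟩ := hcu
      exact Or.inr (iInf_le_of_le i hiu)
    · exact Or.inl (iSup_le fun i => ((h i).2 u hu).resolve_right fun hiu => hcu ⟨i, hiu⟩)

/-- In a finitely bi-spatial complete lattice, the center is a complete
sublattice: arbitrary joins and meets of central elements are central, and the
join of a family of central elements has complement the meet of the
complements. -/
theorem center_completeSublattice {L : Type u} [CompleteLattice L]
    (hFS : FinitelySpatial L) (hDFS : DuallyFinitelySpatial L) :
    ∀ (ι : Type u) (a c : ι → L), (∀ i, IsCentral (a i)) →
      (∀ i, a i ⊓ c i = ⊥ ∧ a i ⊔ c i = ⊤) →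
      IsCentral (⨆ i, a i) ∧ IsCentral (⨅ i, a i) ∧
        (⨆ i, a i) ⊓ ⨅ i, c i = ⊥ ∧ (⨆ i, a i) ⊔ ⨅ i, c i = ⊤ := by
  intro ι a c ha hc
  have split : ∀ i, SplitsIrreducibles (a i) (c i) := fun i =>
    (ha i).1.splitsIrreducibles (IsCompl.of_eq (hc i).1 (hc i).2)
  have split_sup : SplitsIrreducibles (⨆ i, a i) (⨅ i, c i) :=
    SplitsIrreducibles.iSup_iInf split
  have split_inf : SplitsIrreducibles (⨅ i, a i) (⨆ i, c i) :=
    (SplitsIrreducibles.iSup_iInf fun i => (split i).symm).symm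
  have compl_sup := split_sup.isCompl hFS hDFS
  exact ⟨split_sup.isCentral hFS hDFS, split_inf.isCentral hFS hDFS,
    compl_sup.inf_eq_bot, compl_sup.sup_eq_top⟩
end

section
/- Let L be a finitely bi-spatial complete lattice. For x ∈ L, the central cover e(x) is the least central element above x (which exists since Cen(L) is a complete sublattice). Then Cen(L) is an atomistic Boolean lattice whose atoms are exactly the elements e(p) for p join-irreducible in L. -/
/-!
If `a` is neutral with complement `b`, then `x = (a ⊓ x) ⊔ (x ⊓ b) = (a ⊔ x) ⊓ (x ⊔ b)`, so every
join-irreducible lies below `a` or `b` and every meet-irreducible lies above `a` or `b`. In a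
finitely bi-spatial lattice this splitting of the irreducibles conversely forces `a` to be central,
and splittings are stable under meets (paired with the join of the partners); so the center is
closed under `sInf` and `e(x)` is central. For join-irreducible `p`, a central `b < e(p)` cannot
lie above `p`, so its complement does, and then `b ≤ e(p)` is below that complement, i.e. `b = ⊥`.
Every central `a` is the join of the atoms `e(p)`, `p ≤ a`, and an atom above `p` equals `e(p)`.
-/

universe u

section Lattice
variable {L : Type*} [Lattice L]

structure SplitsIrred (a b : L) : Prop where
  supIrred_le : ∀ p, SupIrred p → p ≤ a ∨ p ≤ b
  le_infIrred : ∀ u, InfIrred u → a ≤ u ∨ b ≤ u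

theorem SplitsIrred.symm {a b : L} (h : SplitsIrred a b) : SplitsIrred b a :=
  ⟨fun p hp => (h.supIrred_le p hp).symm, fun u hu => (h.le_infIrred u hu).symm⟩

theorem inf_sup_le_sup_inf_sup (a x y : L) :
    a ⊓ x ⊔ a ⊓ y ⊔ x ⊓ y ≤ (a ⊔ x) ⊓ (a ⊔ y) ⊓ (x ⊔ y) := by
  simp [inf_le_of_left_le, inf_le_of_right_le]

end Lattice

section BoundedLattice
variable {L : Type*} [Lattice L] [BoundedOrder L] {a b : L}

/-- The neutrality identity at `y := b`. -/
theorem IsNeutral.sup_inf_sup_eq (h : IsNeutral a) (hinf : a ⊓ b = ⊥) (hsup : a ⊔ b = ⊤)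
    (x : L) : (a ⊔ x) ⊓ (x ⊔ b) = a ⊓ x ⊔ x ⊓ b := by
  simpa only [hinf, hsup, inf_top_eq, sup_bot_eq] using h x b

theorem IsNeutral.splitsIrred (h : IsNeutral a) (hinf : a ⊓ b = ⊥) (hsup : a ⊔ b = ⊤) :
    SplitsIrred a b where
  supIrred_le p hp := by
    have hle : p ≤ a ⊓ p ⊔ p ⊓ b :=
      (le_inf le_sup_right le_sup_left).trans (h.sup_inf_sup_eq hinf hsup p).le
    rcases hp.2 (le_antisymm (sup_le inf_le_right inf_le_left) hle) with hpa | hpb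
    · exact Or.inl (hpa ▸ inf_le_left)
    · exact Or.inr (hpb ▸ inf_le_right)
  le_infIrred u hu := by
    have hge : (a ⊔ u) ⊓ (u ⊔ b) ≤ u :=
      (h.sup_inf_sup_eq hinf hsup u).le.trans (sup_le inf_le_right inf_le_left)
    rcases hu.2 (le_antisymm hge (le_inf le_sup_right le_sup_left)) with hau | hub
    · exact Or.inl (hau ▸ le_sup_left)
    · exact Or.inr (hub ▸ le_sup_right)

theorem IsCentral.exists_splitsIrred (h : IsCentral a) : ∃ b, SplitsIrred a b :=
  let ⟨hn, b, hinf, hsup⟩ := h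
  ⟨b, hn.splitsIrred hinf hsup⟩

end BoundedLattice

section CompleteLattice
variable {L : Type*} [CompleteLattice L]

theorem splitsIrred_sInf_sSup {S : Set L} (hS : ∀ a ∈ S, ∃ b, SplitsIrred a b) :
    SplitsIrred (sInf S) (sSup {b | ∃ a ∈ S, SplitsIrred a b}) where
  supIrred_le p hp := by
    by_cases hall : ∀ a ∈ S, p ≤ a
    · exact Or.inl (le_sInf hall)
    push Not at hall
    obtain ⟨a, haS, hpa⟩ := hall
    obtain ⟨b, hab⟩ := hS a haS
    exact Or.inr ((hab.supIrred_le p hp).resolve_left hpa |>.trans (le_sSup ⟨a, haS, hab⟩))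
  le_infIrred u hu := by
    by_cases hex : ∃ a ∈ S, a ≤ u
    · obtain ⟨a, haS, hau⟩ := hex
      exact Or.inl ((sInf_le haS).trans hau)
    push Not at hex
    exact Or.inr <| sSup_le fun b ⟨a, haS, hab⟩ =>
      (hab.le_infIrred u hu).resolve_left (hex a haS)

variable (hFS : FinitelySpatial L) (hDFS : DuallyFinitelySpatial L) {a b : L}

include hFS in
theorem FinitelySpatial.exists_supIrred_le {x : L} (hx : x ≠ ⊥) :
    ∃ p, SupIrred p ∧ p ≤ x := by
  by_contra! h
  exact hx (le_bot_iff.1 ((hFS x).2 fun p hp => absurd hp.2 (h p hp.1)))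

namespace SplitsIrred

include hFS in
theorem sup_eq_top (h : SplitsIrred a b) : a ⊔ b = ⊤ :=
  top_le_iff.1 <| (hFS ⊤).2 fun p hp =>
    (h.supIrred_le p hp.1).elim (·.trans le_sup_left) (·.trans le_sup_right)

include hDFS in
theorem inf_eq_bot (h : SplitsIrred a b) : a ⊓ b = ⊥ :=
  le_bot_iff.1 <| (hDFS ⊥).2 fun u hu =>
    (h.le_infIrred u hu.1).elim (inf_le_left.trans ·) (inf_le_right.trans ·)

include hFS in
theorem le_inf_sup_inf (h : SplitsIrred a b) (x : L) : x ≤ x ⊓ a ⊔ x ⊓ b :=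
  (hFS x).2 fun p ⟨hp, hpx⟩ =>
    (h.supIrred_le p hp).elim (fun hpa => le_sup_of_le_left (le_inf hpx hpa))
      (fun hpb => le_sup_of_le_right (le_inf hpx hpb))

include hFS hDFS in
theorem inf_sup_le (h : SplitsIrred a b) (x y : L) : a ⊓ (x ⊔ y) ≤ a ⊓ x ⊔ a ⊓ y := by
  refine (hDFS _).2 fun u ⟨hu, hxyu⟩ => ?_
  rcases h.le_infIrred u hu with hau | hbu
  · exact inf_le_left.trans hau
  · have below_u : ∀ z, a ⊓ z ≤ u → z ≤ u := fun z haz =>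
      (h.le_inf_sup_inf hFS z).trans
        (sup_le ((inf_comm z a).le.trans haz) (inf_le_right.trans hbu))
    exact inf_le_right.trans (sup_le (below_u x (le_sup_left.trans hxyu))
      (below_u y (le_sup_right.trans hxyu)))

include hFS hDFS in
theorem isNeutral (h : SplitsIrred a b) : IsNeutral a := by
  intro x y
  refine le_antisymm ?_ (inf_sup_le_sup_inf_sup a x y)
  set m := (a ⊔ x) ⊓ (a ⊔ y) ⊓ (x ⊔ y)
  -- Split `m` along `a, b`; the `b`-part is small because `b` distributes and `b ⊓ a = ⊥`.
  have hb : ∀ z, b ⊓ (a ⊔ z) ≤ z := fun z => by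
    have := h.symm.inf_sup_le hFS hDFS a z
    rw [inf_comm b a, h.inf_eq_bot hDFS, bot_sup_eq] at this
    exact this.trans inf_le_right
  have hma : m ⊓ a ≤ a ⊓ x ⊔ a ⊓ y :=
    (le_inf inf_le_right (inf_le_left.trans inf_le_right)).trans (h.inf_sup_le hFS hDFS x y)
  have hmb : m ⊓ b ≤ x ⊓ y :=
    le_inf
      ((le_inf inf_le_right (inf_le_left.trans (inf_le_left.trans inf_le_left))).trans (hb x))
      ((le_inf inf_le_right (inf_le_left.trans (inf_le_left.trans inf_le_right))).trans (hb y))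
  exact (h.le_inf_sup_inf hFS m).trans (sup_le_sup hma hmb)

include hFS hDFS in
theorem isCentral (h : SplitsIrred a b) : IsCentral a :=
  ⟨h.isNeutral hFS hDFS, b, h.inf_eq_bot hDFS, h.sup_eq_top hFS⟩

end SplitsIrred

include hFS hDFS in
theorem isCentral_sInf {S : Set L} (hS : ∀ a ∈ S, IsCentral a) : IsCentral (sInf S) :=
  (splitsIrred_sInf_sSup fun a ha => (hS a ha).exists_splitsIrred).isCentral hFS hDFS

/-- The central cover `e(x)`. -/
def centralCover (x : L) : L := sInf {v : L | IsCentral v ∧ x ≤ v}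

theorem le_centralCover (x : L) : x ≤ centralCover x :=
  le_sInf fun _ hv => hv.2

theorem centralCover_le {x : L} (ha : IsCentral a) (hxa : x ≤ a) : centralCover x ≤ a :=
  sInf_le ⟨ha, hxa⟩

include hFS hDFS

theorem isCentral_centralCover (x : L) : IsCentral (centralCover x) :=
  isCentral_sInf hFS hDFS fun _ hv => hv.1

theorem isCenterAtom_centralCover {p : L} (hp : SupIrred p) : IsCenterAtom (centralCover p) := by
  refine ⟨isCentral_centralCover hFS hDFS p,
    fun h => hp.ne_bot (le_bot_iff.1 (h ▸ le_centralCover p)), fun b hb hlt => ?_⟩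
  obtain ⟨c, hbc⟩ := hb.exists_splitsIrred
  rcases hbc.supIrred_le p hp with hpb | hpc
  · exact absurd (centralCover_le hb hpb) hlt.not_ge
  · have hbc_le : b ≤ c := hlt.le.trans (centralCover_le (hbc.symm.isCentral hFS hDFS) hpc)
    exact le_bot_iff.1 (hbc.inf_eq_bot hDFS ▸ le_inf le_rfl hbc_le)

theorem IsCenterAtom.exists_eq_centralCover {u : L} (hu : IsCenterAtom u) :
    ∃ p, SupIrred p ∧ u = centralCover p := by
  obtain ⟨hcen, hne, hmin⟩ := hu
  obtain ⟨p, hp, hpu⟩ := hFS.exists_supIrred_le hne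
  refine ⟨p, hp, ((centralCover_le hcen hpu).eq_or_lt.resolve_right fun hlt => ?_).symm⟩
  exact hp.ne_bot (le_bot_iff.1 (hmin _ (isCentral_centralCover hFS hDFS p) hlt ▸
    le_centralCover p))

theorem IsCentral.eq_sSup_centerAtoms (ha : IsCentral a) :
    a = sSup {u : L | IsCenterAtom u ∧ u ≤ a} :=
  le_antisymm ((hFS a).2 fun p ⟨hp, hpa⟩ => (le_centralCover p).trans
      (le_sSup ⟨isCenterAtom_centralCover hFS hDFS hp, centralCover_le ha hpa⟩))
    (sSup_le fun _ hu => hu.2)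

end CompleteLattice

/-- In a finitely bi-spatial complete lattice, the center is atomistic, and its
atoms are exactly the central covers `e p = ⋀ {u central | p ≤ u}` of the
join-irreducible elements `p` of `L`. -/
theorem center_atomistic_atoms_eq_centralCovers {L : Type u} [CompleteLattice L]
    (hFS : FinitelySpatial L) (hDFS : DuallyFinitelySpatial L) :
    (∀ a : L, IsCentral a → a = sSup {u : L | IsCenterAtom u ∧ u ≤ a}) ∧
      (∀ u : L, IsCenterAtom u ↔
        ∃ p : L, SupIrred p ∧ u = sInf {v : L | IsCentral v ∧ p ≤ v}) :=
  ⟨fun _ ha => ha.eq_sSup_centerAtoms hFS hDFS, fun _ =>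
    ⟨IsCenterAtom.exists_eq_centralCover hFS hDFS,
      fun ⟨_, hp, hu⟩ => hu ▸ isCenterAtom_centralCover hFS hDFS hp⟩⟩
end

section
/- Every lattice that is both algebraic and dually algebraic is isomorphic to a direct product of directly indecomposable lattices. -/
universe u

/-!
An element `a` with a "central complement" `b` splits the lattice as `Iic a × Iic b` via
`x ↦ (x ⊓ a, x ⊓ b)`. Since meets distribute over directed joins (algebraicity) and joins over
directed meets (dual algebraicity), such direct factors are closed under arbitrary joins and
meets. Below a nonzero compact `c` lies the least direct factor containing it, and a chain of
nonzero direct factors below that one cannot have meet `⊥`: otherwise the complements would form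
a directed family with join `⊤ ≥ c`, and compactness would put `c` into one of them. Zorn's
lemma then gives minimal nonzero direct factors below every nonzero one, so these join to `⊤`;
being pairwise disjoint, they yield `L ≃o ∏ Iic p`. Each `Iic p` is indecomposable, because a
splitting of `Iic p` lifts to a direct factor of `L` strictly between `⊥` and `p`.
-/

/-- `IsCentralPair a b` says that `x ↦ (x ⊓ a, x ⊓ b)` is an order isomorphism onto
`Iic a × Iic b`: the first field gives injectivity, the other two surjectivity. -/
structure IsCentralPair {M : Type*} [Lattice M] (a b : M) : Prop where
  inf_sup_inf (x : M) : x ⊓ a ⊔ x ⊓ b = x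
  sup_inf_left {u v : M} : u ≤ a → v ≤ b → (u ⊔ v) ⊓ a = u
  sup_inf_right {u v : M} : u ≤ a → v ≤ b → (u ⊔ v) ⊓ b = v

def IsDirectFactor {M : Type*} [Lattice M] (a : M) : Prop :=
  ∃ b, IsCentralPair a b

def IsMinimalDirectFactor {M : Type*} [Lattice M] [OrderBot M] (p : M) : Prop :=
  Minimal (fun w => IsDirectFactor w ∧ w ≠ ⊥) p

namespace IsCentralPair

section Lattice

variable {M : Type*} [Lattice M] {a b : M}

theorem symm (h : IsCentralPair a b) : IsCentralPair b a where
  inf_sup_inf x := by rw [sup_comm]; exact h.inf_sup_inf x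
  sup_inf_left hu hv := by rw [sup_comm]; exact h.sup_inf_right hv hu
  sup_inf_right hu hv := by rw [sup_comm]; exact h.sup_inf_left hv hu

theorem sup_inf (h : IsCentralPair a b) (x y : M) : (x ⊔ y) ⊓ a = x ⊓ a ⊔ y ⊓ a := by
  have hsplit : x ⊔ y = (x ⊓ a ⊔ y ⊓ a) ⊔ (x ⊓ b ⊔ y ⊓ b) := by
    rw [sup_sup_sup_comm, h.inf_sup_inf, h.inf_sup_inf]
  rw [hsplit]
  exact h.sup_inf_left (sup_le inf_le_right inf_le_right) (sup_le inf_le_right inf_le_right)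

theorem map {N : Type*} [Lattice N] (h : IsCentralPair a b) (e : M ≃o N) :
    IsCentralPair (e a) (e b) where
  inf_sup_inf x := by
    obtain ⟨x, rfl⟩ := e.surjective x
    rw [← map_inf, ← map_inf, ← map_sup, h.inf_sup_inf]
  sup_inf_left {u v} hu hv := by
    obtain ⟨u, rfl⟩ := e.surjective u
    obtain ⟨v, rfl⟩ := e.surjective v
    rw [← map_sup, ← map_inf, h.sup_inf_left (e.le_iff_le.1 hu) (e.le_iff_le.1 hv)]
  sup_inf_right {u v} hu hv := by
    obtain ⟨u, rfl⟩ := e.surjective u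
    obtain ⟨v, rfl⟩ := e.surjective v
    rw [← map_sup, ← map_inf, h.sup_inf_right (e.le_iff_le.1 hu) (e.le_iff_le.1 hv)]

theorem sup_eq_top [OrderTop M] (h : IsCentralPair a b) : a ⊔ b = ⊤ := by
  simpa using h.inf_sup_inf ⊤

end Lattice

section OrderBot

variable {M : Type*} [Lattice M] [OrderBot M] {a b : M}

theorem inf_eq_bot (h : IsCentralPair a b) : a ⊓ b = ⊥ := by
  simpa [inf_comm] using h.sup_inf_left bot_le le_rfl

theorem of_sup_inf (hab : Disjoint a b) (hsplit : ∀ x, x ⊓ a ⊔ x ⊓ b = x)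
    (ha : ∀ x y, (x ⊔ y) ⊓ a = x ⊓ a ⊔ y ⊓ a) (hb : ∀ x y, (x ⊔ y) ⊓ b = x ⊓ b ⊔ y ⊓ b) :
    IsCentralPair a b where
  inf_sup_inf := hsplit
  sup_inf_left hu hv := by
    rw [ha, inf_eq_left.2 hu, (hab.mono_right hv).symm.eq_bot, sup_bot_eq]
  sup_inf_right hu hv := by
    rw [hb, inf_eq_left.2 hv, (hab.mono_left hu).eq_bot, bot_sup_eq]

theorem le_of_le {a' b' : M} (h : IsCentralPair a b) (h' : IsCentralPair a' b') (hle : a ≤ a') :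
    b' ≤ b :=
  calc b' = b' ⊓ a ⊔ b' ⊓ b := (h.inf_sup_inf b').symm
    _ ≤ ⊥ ⊔ b := sup_le_sup ((inf_le_inf_left b' hle).trans h'.symm.inf_eq_bot.le) inf_le_right
    _ = b := bot_sup_eq b

theorem inf_sup_left (h : IsCentralPair a b) (x y : M) : x ⊓ (a ⊔ y) = x ⊓ a ⊔ x ⊓ y := by
  refine le_antisymm ?_ (sup_le (inf_le_inf_left x le_sup_left) (inf_le_inf_left x le_sup_right))
  have hb : (a ⊔ y) ⊓ b ≤ y := by
    rw [h.symm.sup_inf, h.inf_eq_bot, bot_sup_eq]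
    exact inf_le_left
  calc x ⊓ (a ⊔ y) = x ⊓ (a ⊔ y) ⊓ a ⊔ x ⊓ (a ⊔ y) ⊓ b := (h.inf_sup_inf _).symm
    _ ≤ x ⊓ a ⊔ x ⊓ y := by
      rw [inf_assoc x _ b]
      exact sup_le_sup (inf_le_inf_right a inf_le_left) (inf_le_inf_left x hb)

theorem sup {a' b' : M} (h : IsCentralPair a b) (h' : IsCentralPair a' b') :
    IsCentralPair (a ⊔ a') (b ⊓ b') := by
  have hinf : ∀ x, x ⊓ (a ⊔ a') = x ⊓ a ⊔ x ⊓ a' := fun x => h.inf_sup_left x a'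
  refine of_sup_inf ?_ (fun x => ?_) (fun x y => ?_) (fun x y => ?_)
  · rw [disjoint_iff, ← inf_assoc, h.symm.sup_inf, h.inf_eq_bot, bot_sup_eq, inf_right_comm,
      h'.inf_eq_bot, bot_inf_eq]
  · refine le_antisymm (sup_le inf_le_left inf_le_left) ?_
    calc x = x ⊓ a ⊔ (x ⊓ b ⊓ a' ⊔ x ⊓ b ⊓ b') := by rw [h'.inf_sup_inf, h.inf_sup_inf]
      _ ≤ x ⊓ (a ⊔ a') ⊔ x ⊓ (b ⊓ b') := by
        rw [hinf, inf_assoc x b b', ← sup_assoc]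
        exact sup_le_sup_right (sup_le_sup_left (inf_le_inf_right a' inf_le_left) _) _
  · simp only [hinf, h.sup_inf, h'.sup_inf]
    ac_rfl
  · rw [← inf_assoc, h.symm.sup_inf, h'.symm.sup_inf, inf_assoc, inf_assoc]

theorem of_Iic {p p' : M} (hp : IsCentralPair p p') {e f : Set.Iic p}
    (h : IsCentralPair e f) : IsCentralPair (e : M) (f ⊔ p') := by
  have hep : (e : M) ≤ p := e.2
  have hfp : (f : M) ≤ p := f.2
  have hcoe : ∀ x y : M, (x ⊔ y) ⊓ p ⊓ e = x ⊓ p ⊓ e ⊔ y ⊓ p ⊓ e ∧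
      (x ⊔ y) ⊓ p ⊓ f = x ⊓ p ⊓ f ⊔ y ⊓ p ⊓ f := fun x y => by
    rw [hp.sup_inf]
    exact ⟨congrArg Subtype.val (h.sup_inf ⟨x ⊓ p, inf_le_right⟩ ⟨y ⊓ p, inf_le_right⟩),
      congrArg Subtype.val (h.symm.sup_inf ⟨x ⊓ p, inf_le_right⟩ ⟨y ⊓ p, inf_le_right⟩)⟩
  have hinf : ∀ x : M, x ⊓ ((f : M) ⊔ p') = x ⊓ p' ⊔ x ⊓ p ⊓ f := fun x => by
    rw [sup_comm, hp.symm.inf_sup_left, inf_assoc, inf_eq_right.2 hfp]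
  have he : ∀ x : M, x ⊓ p ⊓ e = x ⊓ e := fun x => by rw [inf_assoc, inf_eq_right.2 hep]
  refine of_sup_inf ?_ (fun x => ?_) (fun x y => ?_) (fun x y => ?_)
  · have hef : (e : M) ⊓ f = ⊥ := congrArg Subtype.val h.inf_eq_bot
    have hep' : (e : M) ⊓ p' = ⊥ := le_bot_iff.1 (hp.inf_eq_bot ▸ inf_le_inf_right p' hep)
    rw [disjoint_iff, hinf, inf_eq_left.2 hep, hef, hep', sup_bot_eq]
  · refine le_antisymm (sup_le inf_le_left inf_le_left) ?_
    have hx : x ⊓ p ⊓ e ⊔ x ⊓ p ⊓ f = x ⊓ p :=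
      congrArg Subtype.val (h.inf_sup_inf ⟨x ⊓ p, inf_le_right⟩)
    calc x = x ⊓ p ⊓ e ⊔ x ⊓ p ⊓ f ⊔ x ⊓ p' := by rw [hx, hp.inf_sup_inf]
      _ ≤ x ⊓ e ⊔ x ⊓ (f ⊔ p') := by
        rw [hinf, he, sup_assoc, sup_comm (x ⊓ p ⊓ f)]
  · rw [← he, (hcoe x y).1, he, he]
  · simp only [hinf, hp.symm.sup_inf, (hcoe x y).2]
    ac_rfl

end OrderBot

end IsCentralPair

theorem isCentralPair_prod_top_bot {A B : Type*} [Lattice A] [BoundedOrder A] [Lattice B]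
    [BoundedOrder B] : IsCentralPair ((⊤, ⊥) : A × B) (⊥, ⊤) where
  inf_sup_inf x := by ext <;> simp
  sup_inf_left hu hv := by ext <;> simp [le_bot_iff.1 hu.2, le_bot_iff.1 hv.1]
  sup_inf_right hu hv := by ext <;> simp [le_bot_iff.1 hu.2, le_bot_iff.1 hv.1]

section OrderBot

variable {M : Type*} [Lattice M] [OrderBot M]

theorem inf_finsetSup_of_isDirectFactor {ι : Type*} {f : ι → M}
    (hf : ∀ i, IsDirectFactor (f i)) (x : M) (s : Finset ι) :
    x ⊓ s.sup f = s.sup fun i => x ⊓ f i := by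
  classical
  induction s using Finset.induction_on with
  | empty => simp
  | insert i s _ ih =>
    obtain ⟨b, hb⟩ := hf i
    rw [Finset.sup_insert, Finset.sup_insert, hb.inf_sup_left, ih]

theorem IsMinimalDirectFactor.inf_eq_bot {p q : M} (hp : IsMinimalDirectFactor p)
    (hq : IsMinimalDirectFactor q) (hpq : p ≠ q) : p ⊓ q = ⊥ := by
  by_contra hne
  obtain ⟨p', hp'⟩ := hp.prop.1
  obtain ⟨q', hq'⟩ := hq.prop.1
  have hfac : IsDirectFactor (p ⊓ q) := ⟨p' ⊔ q', (hp'.symm.sup hq'.symm).symm⟩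
  have hle : p ≤ q := (hp.le_of_le ⟨hfac, hne⟩ inf_le_left).trans inf_le_right
  exact hpq (le_antisymm hle (hq.le_of_le hp.prop hle))

end OrderBot

theorem directlyIndecomposable_Iic {M : Type u} [Lattice M] [OrderBot M] {p : M}
    (hp : IsMinimalDirectFactor p) : DirectlyIndecomposable (Set.Iic p) := by
  rintro A B ⟨g⟩
  obtain ⟨p', hp'⟩ := hp.prop.1
  set e := g.symm (⊤, ⊥)
  have hge : g e = (⊤, ⊥) := g.apply_symm_apply _
  have hfac : IsDirectFactor (e : M) := ⟨_, hp'.of_Iic (isCentralPair_prod_top_bot.map g.symm)⟩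
  rcases eq_or_ne (e : M) ⊥ with he0 | he0
  · have : ((⊤, ⊥) : A × B) = ⊥ := by
      rw [← hge, show e = ⊥ from Subtype.ext he0, map_bot]
    exact Or.inl (subsingleton_of_bot_eq_top (congrArg Prod.fst this).symm)
  · have : ((⊤, ⊥) : A × B) = ⊤ := by
      rw [← hge, show e = ⊤ from Subtype.ext (e.2.antisymm (hp.le_of_le ⟨hfac, he0⟩ e.2)),
        map_top]
    exact Or.inr (subsingleton_of_bot_eq_top (congrArg Prod.snd this))

section CompleteLattice

variable {L : Type*} [CompleteLattice L] {ι : Type*}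

theorem Directed.sup_iInf_eq [IsCompactlyGenerated Lᵒᵈ] {f : ι → L} (h : Directed (· ≥ ·) f)
    (a : L) : a ⊔ ⨅ i, f i = ⨅ i, a ⊔ f i :=
  Directed.inf_iSup_eq (α := Lᵒᵈ) h

theorem IsCompactElement.exists_le_of_directed {c : L} (hc : IsCompactElement c) [Nonempty ι]
    {f : ι → L} (hf : Directed (· ≤ ·) f) (h : c ≤ ⨆ i, f i) : ∃ i, c ≤ f i := by
  obtain ⟨_, ⟨i, rfl⟩, hi⟩ :=
    (CompleteLattice.isCompactElement_iff_le_of_directed_sSup_le L c).1 hc _ (Set.range_nonempty f)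
      hf.directedOn_range h
  exact ⟨i, hi⟩

theorem IsCentralPair.iSup_inf {a b : L} (h : IsCentralPair a b) (f : ι → L) :
    (⨆ i, f i) ⊓ a = ⨆ i, f i ⊓ a := by
  have hsplit : ⨆ i, f i = (⨆ i, f i ⊓ a) ⊔ ⨆ i, f i ⊓ b := by
    rw [← iSup_sup_eq]
    exact iSup_congr fun i => (h.inf_sup_inf (f i)).symm
  rw [hsplit]
  exact h.sup_inf_left (iSup_le fun i => inf_le_right) (iSup_le fun i => inf_le_right)

theorem IsCentralPair.finsetSup_finsetInf {a b : ι → L} (h : ∀ i, IsCentralPair (a i) (b i))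
    (s : Finset ι) : IsCentralPair (s.sup a) (s.inf b) := by
  classical
  induction s using Finset.induction_on with
  | empty =>
    exact ⟨fun x => by simp, fun hu _ => by simp [le_bot_iff.1 hu],
      fun hu _ => by simp [le_bot_iff.1 hu]⟩
  | insert i s _ ih => simpa only [Finset.sup_insert, Finset.inf_insert] using (h i).sup ih

theorem iSup_inf_isMinimalDirectFactor {g : {q : L // IsMinimalDirectFactor q} → L}
    (hg : ∀ q, g q ≤ q) (p : {q : L // IsMinimalDirectFactor q}) : (⨆ q, g q) ⊓ p = g p := by
  obtain ⟨p', hp'⟩ := p.2.prop.1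
  rw [hp'.iSup_inf]
  refine le_antisymm (iSup_le fun q => ?_) (le_iSup_of_le p (le_inf le_rfl (hg p)))
  rcases eq_or_ne q p with rfl | hqp
  · exact inf_le_left
  · exact (inf_le_inf_right _ (hg q)).trans
      ((q.2.inf_eq_bot p.2 (Subtype.coe_ne_coe.2 hqp)).trans_le bot_le)

variable [IsCompactlyGenerated L]

theorem exists_isCompactElement_le {a : L} (ha : a ≠ ⊥) :
    ∃ c, IsCompactElement c ∧ c ≠ ⊥ ∧ c ≤ a := by
  by_contra! h
  refine ha (eq_bot_iff.2 ?_)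
  rw [← sSup_compact_le_eq a]
  exact sSup_le fun c ⟨hc, hca⟩ => (not_ne_iff.1 fun hne => h c hc hne hca).le

theorem inf_iSup_of_isDirectFactor {f : ι → L} (hf : ∀ i, IsDirectFactor (f i)) (x : L) :
    x ⊓ ⨆ i, f i = ⨆ i, x ⊓ f i := by
  classical
  have hdir : Directed (· ≤ ·) fun s : Finset ι => s.sup f :=
    Monotone.directed_le fun _ _ hst => Finset.sup_mono hst
  simp only [iSup_eq_iSup_finset f, iSup_eq_iSup_finset (fun i => x ⊓ f i),
    ← Finset.sup_eq_iSup, hdir.inf_iSup_eq, inf_finsetSup_of_isDirectFactor hf]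

variable [IsCompactlyGenerated Lᵒᵈ]

namespace IsCentralPair

theorem iSup_iInf_of_directed [Nonempty ι] {a b : ι → L} (ha : Directed (· ≤ ·) a)
    (hb : Directed (· ≥ ·) b) (h : ∀ i, IsCentralPair (a i) (b i)) :
    IsCentralPair (⨆ i, a i) (⨅ i, b i) := by
  have hdisj : ∀ i, a i ⊓ ⨅ j, b j = ⊥ := fun i =>
    le_bot_iff.1 ((inf_le_inf_left _ (iInf_le b i)).trans (h i).inf_eq_bot.le)
  have hbot : (⨆ i, a i) ⊓ ⨅ i, b i = ⊥ := by
    rw [ha.iSup_inf_eq]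
    exact iSup_eq_bot.2 hdisj
  refine ⟨fun x => le_antisymm (sup_le inf_le_left inf_le_left) ?_, fun {u v} hu hv => ?_,
    fun {u v} hu hv => ?_⟩
  · have hx : ∀ i, x ≤ x ⊓ (⨆ i, a i) ⊔ x ⊓ b i := fun i =>
      calc x = x ⊓ a i ⊔ x ⊓ b i := ((h i).inf_sup_inf x).symm
        _ ≤ _ := sup_le_sup_right (inf_le_inf_left x (le_iSup a i)) _
    have hxb : Directed (· ≥ ·) fun i => x ⊓ b i :=
      hb.mono_comp (· ≥ ·) fun _ _ hle => inf_le_inf_left x hle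
    calc x ≤ ⨅ i, x ⊓ (⨆ i, a i) ⊔ x ⊓ b i := le_iInf hx
      _ = x ⊓ (⨆ i, a i) ⊔ x ⊓ ⨅ i, b i := by rw [← hxb.sup_iInf_eq, inf_iInf]
  · refine le_antisymm ?_ (le_inf le_sup_left hu)
    rw [ha.inf_iSup_eq]
    refine iSup_le fun i => ?_
    rw [(h i).sup_inf, inf_comm v, le_bot_iff.1 ((inf_le_inf_left _ hv).trans (hdisj i).le),
      sup_bot_eq]
    exact inf_le_left
  · refine le_antisymm ?_ (le_inf le_sup_right hv)
    have hub : Directed (· ≥ ·) fun i => u ⊓ b i :=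
      hb.mono_comp (· ≥ ·) fun _ _ hle => inf_le_inf_left u hle
    have hterm : ∀ i, (u ⊔ v) ⊓ b i = v ⊔ u ⊓ b i := fun i => by
      rw [(h i).symm.sup_inf, inf_eq_left.2 (hv.trans (iInf_le b i)), sup_comm]
    calc (u ⊔ v) ⊓ ⨅ i, b i = v ⊔ u ⊓ ⨅ i, b i := by
          rw [inf_iInf, iInf_congr hterm, ← hub.sup_iInf_eq, inf_iInf]
      _ ≤ v := sup_le le_rfl ((inf_le_inf_right _ hu).trans (hbot.trans_le bot_le))

theorem iSup_iInf {a b : ι → L} (h : ∀ i, IsCentralPair (a i) (b i)) :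
    IsCentralPair (⨆ i, a i) (⨅ i, b i) := by
  classical
  have hs := iSup_iInf_of_directed (a := fun s : Finset ι => s.sup a) (b := fun s => s.inf b)
    (Monotone.directed_le fun _ _ hst => Finset.sup_mono hst)
    (Antitone.directed_ge fun _ _ hst => Finset.inf_mono hst) (finsetSup_finsetInf h)
  simpa only [Finset.sup_eq_iSup, Finset.inf_eq_iInf, ← iSup_eq_iSup_finset,
    ← iInf_eq_iInf_finset] using hs

theorem iInf_iSup {a b : ι → L} (h : ∀ i, IsCentralPair (a i) (b i)) :
    IsCentralPair (⨅ i, a i) (⨆ i, b i) :=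
  (iSup_iInf fun i => (h i).symm).symm

end IsCentralPair

theorem isDirectFactor_iSup {f : ι → L} (hf : ∀ i, IsDirectFactor (f i)) :
    IsDirectFactor (⨆ i, f i) := by
  choose b hb using hf
  exact ⟨_, IsCentralPair.iSup_iInf hb⟩

theorem isDirectFactor_sInf {S : Set L} (hS : ∀ z ∈ S, IsDirectFactor z) :
    IsDirectFactor (sInf S) := by
  choose b hb using fun z : S => hS z z.2
  exact sInf_eq_iInf' S ▸ ⟨_, IsCentralPair.iInf_iSup hb⟩

theorem sInf_ne_bot_of_directedOn {c : L} (hc : IsCompactElement c) {C : Set L}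
    (hCne : C.Nonempty) (hC : DirectedOn (· ≥ ·) C) (hfac : ∀ z ∈ C, IsDirectFactor z)
    (hcompl : ∀ z ∈ C, ∀ z', IsCentralPair z z' → ¬c ≤ z') : sInf C ≠ ⊥ := by
  intro hbot
  have := hCne.to_subtype
  choose b hb using fun z : C => hfac z z.2
  have htop : ⨆ z, b z = ⊤ := by
    simpa [← sInf_eq_iInf', hbot] using (IsCentralPair.iInf_iSup hb).sup_eq_top
  have hdir : Directed (· ≤ ·) b := fun z w =>
    let ⟨k, hkz, hkw⟩ := directedOn_iff_directed.1 hC z w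
    ⟨k, (hb k).le_of_le (hb z) hkz, (hb k).le_of_le (hb w) hkw⟩
  obtain ⟨z, hz⟩ := hc.exists_le_of_directed hdir (htop ▸ le_top)
  exact hcompl z z.2 _ (hb z) hz

theorem IsDirectFactor.exists_isMinimalDirectFactor_le {a : L} (ha : IsDirectFactor a)
    (ha0 : a ≠ ⊥) : ∃ p, IsMinimalDirectFactor p ∧ p ≤ a := by
  obtain ⟨c, hc, hc0, hca⟩ := exists_isCompactElement_le ha0
  set hull := sInf {z : L | IsDirectFactor z ∧ c ≤ z}
  have hull_le : ∀ z, IsDirectFactor z → c ≤ z → hull ≤ z := fun z hz hcz => sInf_le ⟨hz, hcz⟩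
  have hhull : IsDirectFactor hull := isDirectFactor_sInf fun z hz => hz.1
  have hull0 : hull ≠ ⊥ := fun h => hc0 (le_bot_iff.1 (h ▸ le_sInf fun z hz => hz.2))
  set T := {z : L | IsDirectFactor z ∧ z ≠ ⊥ ∧ z ≤ hull}
  -- a complement of a nonzero `z ≤ hull` cannot contain `c`, as it would then contain `hull ≥ z`
  have hcompl : ∀ z ∈ T, ∀ z', IsCentralPair z z' → ¬c ≤ z' := fun z hz z' hzz' hcz' =>
    hz.2.1 (le_bot_iff.1 (hzz'.inf_eq_bot ▸
      le_inf le_rfl (hz.2.2.trans (hull_le z' ⟨z, hzz'.symm⟩ hcz'))))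
  obtain ⟨p, -, hpT, hp⟩ := zorn_le_nonempty₀ (α := Lᵒᵈ) T (fun C hCT hC y hy =>
    ⟨sInf (α := L) C, ⟨isDirectFactor_sInf fun z hz => (hCT hz).1,
      sInf_ne_bot_of_directedOn hc ⟨y, hy⟩ hC.directedOn (fun z hz => (hCT hz).1)
        (fun z hz => hcompl z (hCT hz)), (sInf_le (α := L) hy).trans (hCT hy).2.2⟩,
      fun z hz => sInf_le (α := L) hz⟩) hull ⟨hhull, hull0, le_rfl⟩
  exact ⟨p, ⟨⟨hpT.1, hpT.2.1⟩, fun w hw hwp => hp ⟨hw.1, hw.2, hwp.trans hpT.2.2⟩ hwp⟩,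
    hpT.2.2.trans (hull_le a ha hca)⟩

theorem iSup_isMinimalDirectFactor_eq_top :
    ⨆ p : {p : L // IsMinimalDirectFactor p}, (p : L) = ⊤ := by
  obtain ⟨m, hm⟩ := isDirectFactor_iSup fun p : {p : L // IsMinimalDirectFactor p} => p.2.prop.1
  by_cases hm0 : m = ⊥
  · simpa [hm0] using hm.sup_eq_top
  · obtain ⟨q, hq, hqm⟩ := IsDirectFactor.exists_isMinimalDirectFactor_le ⟨_, hm.symm⟩ hm0
    exact absurd (le_bot_iff.1 (hm.inf_eq_bot ▸ le_inf (le_iSup_of_le ⟨q, hq⟩ le_rfl) hqm))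
      hq.prop.2

noncomputable def orderIsoPiIicIsMinimalDirectFactor :
    L ≃o ∀ p : {p : L // IsMinimalDirectFactor p}, Set.Iic (p : L) :=
  Equiv.toOrderIso
    { toFun x p := ⟨x ⊓ p, inf_le_right⟩
      invFun f := ⨆ p, (f p : L)
      left_inv x := by
        change ⨆ p : {p : L // IsMinimalDirectFactor p}, x ⊓ (p : L) = x
        rw [← inf_iSup_of_isDirectFactor fun p => p.2.prop.1, iSup_isMinimalDirectFactor_eq_top,
          inf_top_eq]
      right_inv f :=
        funext fun p => Subtype.ext (iSup_inf_isMinimalDirectFactor (fun q => (f q).2) p) }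
    (fun _ _ hxy _ => inf_le_inf_right _ hxy)
    (fun _ _ hfg => iSup_mono hfg)

end CompleteLattice

/-- Every algebraic and dually algebraic lattice is isomorphic to a direct
product of directly indecomposable lattices. -/
theorem totallyDecomposable_of_algebraic_duallyAlgebraic {L : Type u} [CompleteLattice L]
    [IsCompactlyGenerated L] [IsCompactlyGenerated Lᵒᵈ] :
    TotallyDecomposable L :=
  ⟨{p : L // IsMinimalDirectFactor p}, fun p => BddLat.of (Set.Iic (p : L)),
    fun p => directlyIndecomposable_Iic p.2, ⟨orderIsoPiIicIsMinimalDirectFactor⟩⟩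
end

section
/- Let D be the set of subsets of ω+1 = ω ∪ {ω} consisting of all finite subsets of ω together with all sets of the form x ∪ {ω} with x ⊆ ω. Then D, ordered by inclusion, is a complete, atomistic, distributive lattice (a closure system in the powerset of ω+1, with finite joins given by union), its center consists exactly of the finite subsets of ω and the sets x ∪ {ω} with x ⊆ ω cofinite, and Cen(D) is not a complete sublattice of D; in particular D is not totally decomposable. -/
universe u

/-- The closed sets of the interval topology on `ω + 1` (here modelled on
`Option ℕ`, with `none` playing the role of the point `ω`): all finite subsets
of `ω` together with all sets containing the point `ω`. -/
def OmegaClosed : Type := {s : Set (Option ℕ) // Option.none ∈ s ∨ s.Finite}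

namespace OmegaClosed

instance : PartialOrder OmegaClosed := Subtype.partialOrder _

instance : InfSet OmegaClosed :=
  ⟨fun S => ⟨⋂ s ∈ S, s.val, by
    by_cases h : ∀ s ∈ S, Option.none ∈ s.val
    · exact Or.inl (by simpa using h)
    · push_neg at h
      obtain ⟨s₀, hs₀S, hs₀⟩ := h
      refine Or.inr (Set.Finite.subset ?_ (Set.biInter_subset_of_mem hs₀S))
      exact s₀.2.resolve_left hs₀⟩⟩

noncomputable instance : CompleteLattice OmegaClosed :=
  completeLatticeOfInf OmegaClosed (by
    intro S
    constructor
    · intro s hs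
      show (sInf S).val ⊆ s.val
      exact Set.biInter_subset_of_mem hs
    · intro t ht
      show t.val ⊆ (sInf S).val
      exact Set.subset_iInter₂ fun s hs => ht hs)

end OmegaClosed

/-!
Every element of `D` is neutral since `D` is distributive, so the center of `D` consists of its
complemented elements, i.e. the closed sets whose complement is closed as well. An infinite union
of finite sets has to be closed up by adding `ω`, which is why the center is not closed under
joins. If `D` were a product of directly indecomposable factors, the point `{ω}` would meet the
unit `c` of some factor, so `c` would be a complemented (hence cofinite) closed set containing `ω`;
but removing any natural number `m ∈ c` splits `c` into the two nonzero disjoint closed sets `{m}`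
and `c \ {m}`, so the factor `Iic c` is directly decomposable.
-/

open Set Function

section DistribLattice

variable {L : Type*} [DistribLattice L]

theorem isNeutral_of_distribLattice (a : L) : IsNeutral a := by
  intro x y
  rw [← sup_inf_left, inf_sup_right, inf_sup_left, inf_eq_left.2 (inf_le_left.trans le_sup_left)]

theorem isCentral_iff_isComplemented [BoundedOrder L] {a : L} :
    IsCentral a ↔ IsComplemented a := by
  simp only [IsCentral, IsComplemented, isCompl_iff, disjoint_iff, codisjoint_iff,
    isNeutral_of_distribLattice a, true_and]

def OrderIso.IicSupOfDisjoint [OrderBot L] {a b : L} (h : Disjoint a b) :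
    Iic (a ⊔ b) ≃o Iic a × Iic b :=
  Equiv.toOrderIso
    { toFun x := (⟨x ⊓ a, inf_le_right⟩, ⟨x ⊓ b, inf_le_right⟩)
      invFun p := ⟨p.1 ⊔ p.2, sup_le_sup p.1.2 p.2.2⟩
      left_inv x := Subtype.ext <| by
        simp only [← inf_sup_left, inf_eq_left.2 (mem_Iic.1 x.2)]
      right_inv p := by
        have ha : p.2.1 ⊓ a = ⊥ := disjoint_iff.1 (h.symm.mono_left p.2.2)
        have hb : p.1.1 ⊓ b = ⊥ := disjoint_iff.1 (h.mono_left p.1.2)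
        ext <;> simp [inf_sup_right, ha, hb, inf_eq_left.2 p.1.2, inf_eq_left.2 p.2.2] }
    (fun _ _ hxy => ⟨inf_le_inf_right a hxy, inf_le_inf_right b hxy⟩)
    (fun _ _ hpq => sup_le_sup hpq.1 hpq.2)

end DistribLattice

def OrderIso.IicUpdateTop {ι : Type*} [DecidableEq ι] {F : ι → Type*} [∀ i, PartialOrder (F i)]
    [∀ i, BoundedOrder (F i)] (i : ι) : Iic (update (⊥ : ∀ j, F j) i ⊤) ≃o F i :=
  Equiv.toOrderIso
    { toFun x := x.1 i
      invFun a := ⟨update ⊥ i a, update_le_update_iff'.2 le_top⟩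
      left_inv x := Subtype.ext <| update_eq_iff.2
        ⟨rfl, fun j hj => (le_bot_iff.1 (by simpa [hj] using x.2 j)).symm⟩
      right_inv a := update_self i a ⊥ }
    (fun _ _ h => h i) (fun _ _ h => update_le_update_iff'.2 h)

theorem Pi.isCompl_update_bot_top {ι : Type*} [DecidableEq ι] {F : ι → Type*}
    [∀ i, Lattice (F i)] [∀ i, BoundedOrder (F i)] (i : ι) :
    IsCompl (update (⊥ : ∀ j, F j) i ⊤) (update ⊤ i ⊥) := by
  refine Pi.isCompl_iff.2 fun j => ?_
  rcases eq_or_ne j i with rfl | hj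
  · simpa using (isCompl_top_bot : IsCompl (⊤ : F j) ⊥)
  · simpa [hj] using (isCompl_bot_top : IsCompl (⊥ : F j) ⊤)

theorem DirectlyIndecomposable.of_orderIso {M N : Type u} [Lattice M] [BoundedOrder M]
    [Lattice N] [BoundedOrder N] (e : M ≃o N) (h : DirectlyIndecomposable M) :
    DirectlyIndecomposable N :=
  fun A B ⟨f⟩ => h A B ⟨e.trans f⟩

theorem not_directlyIndecomposable_Iic_sup {L : Type u} [DistribLattice L] [OrderBot L]
    {a b : L} (h : Disjoint a b) (ha : a ≠ ⊥) (hb : b ≠ ⊥) :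
    ¬DirectlyIndecomposable (Iic (a ⊔ b)) := by
  have trivial_Iic {c : L} (hc : Subsingleton (Iic c)) : c = ⊥ :=
    congrArg Subtype.val (hc.elim (⟨c, le_rfl⟩ : Iic c) ⊥)
  intro hind
  rcases hind (BddLat.of (Iic a)) (BddLat.of (Iic b)) ⟨OrderIso.IicSupOfDisjoint h⟩ with hs | hs
  · exact ha (trivial_Iic hs)
  · exact hb (trivial_Iic hs)

theorem TotallyDecomposable.exists_not_disjoint {M : Type u} [Lattice M] [BoundedOrder M]
    (hM : TotallyDecomposable M) {x : M} (hx : x ≠ ⊥) :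
    ∃ c : M, IsComplemented c ∧ DirectlyIndecomposable (Iic c) ∧ ¬Disjoint x c := by
  classical
  obtain ⟨ι, F, hF, ⟨e⟩⟩ := hM
  obtain ⟨i, hi⟩ : ∃ i, e x i ≠ ⊥ := by
    by_contra! h
    exact hx ((map_eq_bot_iff e).1 (funext h))
  have hunit : e (e.symm (update ⊥ i ⊤)) = update ⊥ i ⊤ := e.apply_symm_apply _
  refine ⟨e.symm (update ⊥ i ⊤), ⟨_, e.symm.isCompl (Pi.isCompl_update_bot_top i)⟩,
    (hF i).of_orderIso ((e.Iic _).trans ((OrderIso.setCongr _ _ (by rw [hunit])).trans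
      (OrderIso.IicUpdateTop i))).symm, fun hdis => hi ?_⟩
  have hi_dis := Pi.disjoint_iff.1 (hunit ▸ hdis.map_orderIso e) i
  rwa [update_self, disjoint_top] at hi_dis

namespace OmegaClosed

def mk (s : Set (Option ℕ)) (h : none ∈ s ∨ s.Finite) : OmegaClosed := ⟨s, h⟩

theorem val_injective : Injective (Subtype.val : OmegaClosed → Set (Option ℕ)) :=
  Subtype.val_injective

theorem val_inj {x y : OmegaClosed} : x.val = y.val ↔ x = y := val_injective.eq_iff

theorem val_subset_val {x y : OmegaClosed} : x.val ⊆ y.val ↔ x ≤ y := Iff.rfl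

theorem val_bot : (⊥ : OmegaClosed).val = ∅ :=
  subset_empty_iff.1 (bot_le (a := mk ∅ (Or.inr finite_empty)))

theorem val_top : (⊤ : OmegaClosed).val = univ :=
  univ_subset_iff.1 (le_top (a := mk univ (Or.inl trivial)))

theorem val_sup (x y : OmegaClosed) : (x ⊔ y).val = x.val ∪ y.val := by
  have closed : none ∈ x.val ∪ y.val ∨ (x.val ∪ y.val).Finite := by
    rcases x.2, y.2 with ⟨hx | hx, hy | hy⟩
    exacts [Or.inl (Or.inl hx), Or.inl (Or.inl hx), Or.inl (Or.inr hy), Or.inr (hx.union hy)]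
  exact Subset.antisymm (sup_le (a := x) (b := y) (c := mk _ closed) subset_union_left
    subset_union_right) (union_subset (val_subset_val.2 le_sup_left) (val_subset_val.2 le_sup_right))

theorem val_inf (x y : OmegaClosed) : (x ⊓ y).val = x.val ∩ y.val := by
  have closed : none ∈ x.val ∩ y.val ∨ (x.val ∩ y.val).Finite := by
    rcases x.2, y.2 with ⟨hx | hx, hy | hy⟩
    exacts [Or.inl ⟨hx, hy⟩, Or.inr (hy.subset inter_subset_right),
      Or.inr (hx.subset inter_subset_left), Or.inr (hx.subset inter_subset_left)]
  exact Subset.antisymm (subset_inter (val_subset_val.2 inf_le_left) (val_subset_val.2 inf_le_right))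
    (le_inf inter_subset_left inter_subset_right : mk _ closed ≤ x ⊓ y)

noncomputable instance : DistribLattice OmegaClosed :=
  DistribLattice.ofInfSupLe fun x y z => by
    rw [← val_subset_val, val_inf, val_sup, val_sup, val_inf, val_inf, inter_union_distrib_left]

theorem disjoint_val {x y : OmegaClosed} : Disjoint x.val y.val ↔ Disjoint x y := by
  simp only [disjoint_iff, ← val_inj, val_inf, val_bot, inf_eq_inter, bot_eq_empty]

theorem isCompl_val {x y : OmegaClosed} : IsCompl x.val y.val ↔ IsCompl x y := by
  simp only [isCompl_iff, codisjoint_iff, ← val_inj, val_sup, val_top, sup_eq_union, top_eq_univ,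
    disjoint_val]

theorem isComplemented_iff (x : OmegaClosed) :
    IsComplemented x ↔ none ∉ x.val ∨ x.valᶜ.Finite := by
  constructor
  · rintro ⟨y, hxy⟩
    simpa only [← (isCompl_val.2 hxy).compl_eq, mem_compl_iff] using y.2
  · intro h
    exact ⟨mk x.valᶜ h, isCompl_val.1 isCompl_compl⟩

def singleton (p : Option ℕ) : OmegaClosed :=
  mk {p} (p.casesOn (Or.inl rfl) fun _ => Or.inr (finite_singleton _))

theorem ne_bot_of_mem {x : OmegaClosed} {p : Option ℕ} (hp : p ∈ x.val) : x ≠ ⊥ := fun h =>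
  eq_empty_iff_forall_notMem.1 ((val_inj.2 h).trans val_bot) p hp

theorem singleton_ne_bot (p : Option ℕ) : singleton p ≠ ⊥ :=
  ne_bot_of_mem (mem_singleton p)

theorem isAtom_singleton (p : Option ℕ) : IsAtom (singleton p) := by
  refine ⟨singleton_ne_bot p, fun b hb => val_injective ?_⟩
  rw [val_bot]
  exact (subset_singleton_iff_eq.1 hb.le).resolve_right fun h => hb.ne (val_injective h)

instance : IsAtomistic OmegaClosed where
  isLUB_atoms x := ⟨singleton '' x.val,
    ⟨forall_mem_image.2 fun _ hp => singleton_subset_iff.2 hp,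
      fun _ hy _ hp => singleton_subset_iff.1 (hy (mem_image_of_mem _ hp))⟩,
    forall_mem_image.2 fun p _ => isAtom_singleton p⟩

theorem isComplemented_singleton_some (n : ℕ) : IsComplemented (singleton (some n)) :=
  (isComplemented_iff _).2 (Or.inl (Option.some_ne_none n).symm)

/-- The join of the even points is `{ω} ∪ 2ℕ`, which is closed but not clopen. -/
theorem not_isComplemented_sSup_evens :
    ¬IsComplemented (sSup (range fun n => singleton (some (2 * n)))) := by
  set s := sSup (range fun n => singleton (some (2 * n)))
  have evens_sub : (range fun n => some (2 * n)) ⊆ s.val := by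
    rintro _ ⟨n, rfl⟩
    exact val_subset_val.2 (le_sSup (mem_range_self n)) rfl
  have odds_sub : (range fun n => some (2 * n + 1)) ⊆ s.valᶜ := by
    have hs : s ≤ mk (insert none (range fun n => some (2 * n))) (Or.inl (mem_insert _ _)) :=
      sSup_le (forall_mem_range.2 fun n => singleton_subset_iff.2 (Or.inr (mem_range_self n)))
    rintro _ ⟨k, rfl⟩ hk
    rcases hs hk with h | ⟨n, h⟩
    · exact Option.some_ne_none _ h
    · exact absurd (Option.some_injective _ h) (by omega)
  have infinite_range {f : ℕ → ℕ} (hf : Injective f) : (range fun n => some (f n)).Infinite :=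
    infinite_range_of_injective (Option.some_injective _ |>.comp hf)
  rw [isComplemented_iff, not_or, not_not]
  exact ⟨s.2.resolve_right ((infinite_range fun _ _ h => by omega).mono evens_sub),
    ((infinite_range fun _ _ h => by omega).mono odds_sub)⟩

theorem not_directlyIndecomposable_Iic {c : OmegaClosed} (hc : IsComplemented c)
    (hω : none ∈ c.val) : ¬DirectlyIndecomposable (Iic c) := by
  have hcof : c.valᶜ.Finite := ((isComplemented_iff c).1 hc).resolve_left (not_not.2 hω)
  obtain ⟨m, hm⟩ : ∃ m : ℕ, some m ∈ c.val := by
    by_contra! h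
    exact (infinite_range_of_injective (Option.some_injective ℕ)).mono
      (range_subset_iff.2 h) |>.not_finite hcof
  set rest := mk (c.val \ {some m}) (Or.inl ⟨hω, (Option.some_ne_none m).symm⟩)
  have hsplit : c = singleton (some m) ⊔ rest := val_injective <| by
    rw [val_sup]
    exact (union_sdiff_cancel (singleton_subset_iff.2 hm)).symm
  have hrest : rest ≠ ⊥ := ne_bot_of_mem (p := none) ⟨hω, (Option.some_ne_none m).symm⟩
  rw [hsplit]
  exact not_directlyIndecomposable_Iic_sup (disjoint_val.1 disjoint_sdiff_right)
    (singleton_ne_bot _) hrest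

theorem not_totallyDecomposable : ¬TotallyDecomposable OmegaClosed := fun h => by
  obtain ⟨c, hc, hind, hmeet⟩ := h.exists_not_disjoint (singleton_ne_bot none)
  refine not_directlyIndecomposable_Iic hc ?_ hind
  by_contra hω
  exact hmeet (disjoint_val.1 (disjoint_singleton_left.2 hω))

end OmegaClosed

/-- The lattice `D` of closed subsets of `ω + 1` is a complete, atomistic,
distributive lattice in which finite joins are unions and arbitrary meets are
intersections; its center consists exactly of the finite subsets of `ω` and the
sets `x ∪ {ω}` with `x` cofinite in `ω`; its center is not a complete
sublattice, and `D` is not totally decomposable. -/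
theorem omegaClosed_counterexample :
    (∀ S : Set OmegaClosed, (sInf S).val = ⋂ s ∈ S, s.val) ∧
    (∀ x y : OmegaClosed, (x ⊔ y).val = x.val ∪ y.val) ∧
    (∀ x y z : OmegaClosed, x ⊓ (y ⊔ z) = (x ⊓ y) ⊔ (x ⊓ z)) ∧
    (∀ x : OmegaClosed, x = sSup {a : OmegaClosed | IsAtom a ∧ a ≤ x}) ∧
    (∀ x : OmegaClosed, IsCentral x ↔ (Option.none ∉ x.val ∨ x.valᶜ.Finite)) ∧
    ¬(∀ S : Set OmegaClosed, (∀ a ∈ S, IsCentral a) →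
        IsCentral (sSup S) ∧ IsCentral (sInf S)) ∧
    ¬TotallyDecomposable OmegaClosed :=
  ⟨fun _ => rfl, OmegaClosed.val_sup, fun _ _ _ => inf_sup_left _ _ _,
    fun x => (sSup_atoms_le_eq x).symm,
    fun x => isCentral_iff_isComplemented.trans (OmegaClosed.isComplemented_iff x),
    fun h => OmegaClosed.not_isComplemented_sSup_evens <| isCentral_iff_isComplemented.1 <|
      (h _ (forall_mem_range.2 fun _ =>
        isCentral_iff_isComplemented.2 (OmegaClosed.isComplemented_singleton_some _))).1,
    OmegaClosed.not_totallyDecomposable⟩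
end
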